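/- arXiv:2106.01368 — 11 statements merged into one kernel-verified Lean document; each statement's English description precedes it below -/
import Mathlib

section
/- Let {Tᵢ}_{i∈ℕ} be a sequence of bounded linear functionals on X satisfying the lower p-frame condition A‖x‖^p ≤ Σᵢ |Tᵢ(x)|^p for all x ∈ X and some A > 0. Define D(U) = {x ∈ X : Σᵢ |Tᵢ(x)|^p < ∞} and U : D(U) → ℓᵖ by Ux = {Tᵢ(x)}ᵢ. Then U is a closed operator: if {x_k} ⊆ D(U) with ‖x_k − x‖ → 0 for some x ∈ X and Ux_k → c in ℓᵖ, then Σᵢ |Tᵢ(x)|^p < ∞ and Tᵢ(x) = cᵢ for every i (i.e. x ∈ D(U) and Ux = c). -/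
private lemma add_rpow_le {p s t : ℝ} (hp : 1 ≤ p) (hs : 0 ≤ s) (ht : 0 ≤ t) :
    (s + t) ^ p ≤ 2 ^ p * (s ^ p + t ^ p) := by
  have hp0 : 0 ≤ p := le_trans zero_le_one hp
  have h1 : s + t ≤ 2 * max s t := by
    rcases le_total s t with h | h
    · simp [max_eq_right h]; linarith
    · simp [max_eq_left h]; linarith
  have h2 : (s + t) ^ p ≤ (2 * max s t) ^ p :=
    Real.rpow_le_rpow (by positivity) h1 hp0
  have h3 : (2 * max s t : ℝ) ^ p = 2 ^ p * (max s t) ^ p :=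
    Real.mul_rpow (by norm_num) (le_max_of_le_left hs)
  have h4 : (max s t) ^ p ≤ s ^ p + t ^ p := by
    rcases le_total s t with h | h
    · rw [max_eq_right h]; nlinarith [Real.rpow_nonneg hs p]
    · rw [max_eq_left h]; nlinarith [Real.rpow_nonneg ht p]
  calc (s + t) ^ p ≤ 2 ^ p * (max s t) ^ p := by rw [← h3]; exact h2
    _ ≤ 2 ^ p * (s ^ p + t ^ p) := by
        have : (0:ℝ) ≤ 2 ^ p := Real.rpow_nonneg (by norm_num) p
        nlinarith

/-- the analysis operator of a family satisfying the lower p-frame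
condition is closed: if `x_k → x` in seminorm and `{Tᵢ(x_k)}ᵢ → c` in ℓᵖ, then
`{Tᵢ(x)}ᵢ ∈ ℓᵖ` and `Tᵢ(x) = cᵢ` for all `i`. -/
theorem analysis_operator_closed {X : Type*} [AddCommGroup X] [Module ℂ X]
    (ν : Seminorm ℂ X) (p : ℝ) (hp : 1 < p)
    (T : ℕ → X →ₗ[ℂ] ℂ)
    (hTb : ∀ i, ∃ M : ℝ, 0 ≤ M ∧ ∀ x : X, ‖T i x‖ ≤ M * ν x)
    (A : ℝ) (hA : 0 < A)
    (hlow : ∀ x : X, ENNReal.ofReal (A * ν x ^ p) ≤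
      ∑' i, ENNReal.ofReal (‖T i x‖ ^ p))
    (xk : ℕ → X) (x : X) (c : ℕ → ℂ)
    (hxk : ∀ k, Summable fun i => ‖T i (xk k)‖ ^ p)
    (hc : Summable fun i => ‖c i‖ ^ p)
    (hconv : Filter.Tendsto (fun k => ν (xk k - x)) Filter.atTop (nhds 0))
    (hUconv : Filter.Tendsto (fun k => ∑' i, ‖T i (xk k) - c i‖ ^ p)
      Filter.atTop (nhds 0)) :
    (Summable fun i => ‖T i x‖ ^ p) ∧ ∀ i, T i x = c i := by
  have hp0 : 0 < p := lt_trans zero_lt_one hp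
  -- summability of the difference sequence, for each k
  have hsd : ∀ k, Summable fun i => ‖T i (xk k) - c i‖ ^ p := by
    intro k
    have hgsum : Summable (fun i => 2 ^ p * (‖T i (xk k)‖ ^ p + ‖c i‖ ^ p)) :=
      ((hxk k).add hc).mul_left _
    refine Summable.of_nonneg_of_le
      (fun i => Real.rpow_nonneg (norm_nonneg _) p) (fun i => ?_) hgsum
    calc ‖T i (xk k) - c i‖ ^ p
        ≤ (‖T i (xk k)‖ + ‖c i‖) ^ p :=
          Real.rpow_le_rpow (norm_nonneg _) (norm_sub_le _ _) (le_of_lt hp0)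
      _ ≤ 2 ^ p * (‖T i (xk k)‖ ^ p + ‖c i‖ ^ p) :=
          add_rpow_le (le_of_lt hp) (norm_nonneg _) (norm_nonneg _)
  have key : ∀ i, T i x = c i := by
    intro i
    -- T i (xk k) → T i x
    obtain ⟨M, hM0, hM⟩ := hTb i
    have h1 : Filter.Tendsto (fun k => T i (xk k)) Filter.atTop (nhds (T i x)) := by
      rw [tendsto_iff_norm_sub_tendsto_zero]
      have hb : ∀ k, ‖T i (xk k) - T i x‖ ≤ M * ν (xk k - x) := by
        intro k
        have := hM (xk k - x)
        simpa [map_sub] using this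
      have hlim : Filter.Tendsto (fun k => M * ν (xk k - x)) Filter.atTop (nhds 0) := by
        simpa using hconv.const_mul M
      exact squeeze_zero (fun k => norm_nonneg _) hb hlim
    -- T i (xk k) → c i
    have h2 : Filter.Tendsto (fun k => T i (xk k)) Filter.atTop (nhds (c i)) := by
      rw [tendsto_iff_norm_sub_tendsto_zero]
      have hple : ∀ k, ‖T i (xk k) - c i‖ ^ p ≤ ∑' j, ‖T j (xk k) - c j‖ ^ p := by
        intro k
        exact Summable.le_tsum (hsd k) i (fun j _ => Real.rpow_nonneg (norm_nonneg _) p)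
      have hptend : Filter.Tendsto (fun k => ‖T i (xk k) - c i‖ ^ p)
          Filter.atTop (nhds 0) :=
        squeeze_zero (fun k => Real.rpow_nonneg (norm_nonneg _) p) hple hUconv
      have htend := hptend.rpow_const (p := p⁻¹) (Or.inr (by positivity))
      have h0 : (0:ℝ) ^ p⁻¹ = 0 := Real.zero_rpow (by positivity)
      rw [h0] at htend
      have heq : (fun k => (‖T i (xk k) - c i‖ ^ p) ^ p⁻¹)
          = fun k => ‖T i (xk k) - c i‖ := by
        funext k
        rw [← Real.rpow_mul (norm_nonneg _), mul_inv_cancel₀ (ne_of_gt hp0),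
          Real.rpow_one]
      rwa [heq] at htend
    exact tendsto_nhds_unique h1 h2
  refine ⟨?_, key⟩
  have : (fun i => ‖T i x‖ ^ p) = fun i => ‖c i‖ ^ p := by
    funext i; rw [key i]
  rw [this]; exact hc
end

section
/- Let {Tᵢ}_{i∈I} be bounded linear functionals on X and suppose there exists a q-Bessel sequence {fᵢ}_{i∈I} ⊆ X for the dual with bound B such that for every x ∈ X with Σᵢ |Tᵢ(x)|^p < ∞, the series Σᵢ Tᵢ(x)·fᵢ converges to x with respect to the seminorm. Then {Tᵢ} satisfies the lower p-frame condition with bound B^{−p/q}: for every x ∈ X with Σᵢ |Tᵢ(x)|^p < ∞, one has B^{−p/q}·‖x‖^p ≤ Σᵢ |Tᵢ(x)|^p. -/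
open Filter

/-- The dual norm `‖R‖ = sup {|R x| : ν x ≤ 1}` of a linear functional. -/
noncomputable def dualNorm {X : Type*} [AddCommGroup X] [Module ℂ X]
    (ν : Seminorm ℂ X) (R : X →ₗ[ℂ] ℂ) : ℝ :=
  sSup ((fun x => ‖R x‖) '' {x | ν x ≤ 1})

/-- A linear functional bounded with respect to the seminorm. -/
def IsBddFunctional {X : Type*} [AddCommGroup X] [Module ℂ X]
    (ν : Seminorm ℂ X) (R : X →ₗ[ℂ] ℂ) : Prop :=
  ∃ M : ℝ, 0 ≤ M ∧ ∀ x : X, ‖R x‖ ≤ M * ν x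

lemma dualNorm_facts {X : Type*} [AddCommGroup X] [Module ℂ X]
    (ν : Seminorm ℂ X) {R : X →ₗ[ℂ] ℂ} (hR : IsBddFunctional ν R) :
    0 ≤ dualNorm ν R ∧ ∀ y : X, ‖R y‖ ≤ dualNorm ν R * ν y := by
  obtain ⟨M, hM0, hM⟩ := hR
  have hbdd : BddAbove ((fun x => ‖R x‖) '' {x | ν x ≤ 1}) := by
    refine ⟨M, ?_⟩
    rintro _ ⟨x, hx, rfl⟩
    exact (hM x).trans (mul_le_of_le_one_right hM0 hx)
  have h0mem : (0 : ℝ) ∈ ((fun x => ‖R x‖) '' {x | ν x ≤ 1}) :=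
    ⟨0, by simp, by simp⟩
  have hdN0 : 0 ≤ dualNorm ν R := le_csSup hbdd h0mem
  refine ⟨hdN0, fun y => ?_⟩
  by_cases h : ν y = 0
  · have := hM y
    rw [h, mul_zero] at this
    rw [h, mul_zero]
    exact this
  · have hν : 0 < ν y := lt_of_le_of_ne (apply_nonneg ν y) (Ne.symm h)
    set z := ((ν y : ℂ))⁻¹ • y with hz_def
    have hz : ν z = 1 := by
      rw [hz_def, map_smul_eq_mul]
      simp only [norm_inv, Complex.norm_real, Real.norm_eq_abs, abs_of_nonneg hν.le]
      exact inv_mul_cancel₀ h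
    have hmem : ‖R z‖ ∈ ((fun x => ‖R x‖) '' {x | ν x ≤ 1}) :=
      ⟨z, by rw [Set.mem_setOf_eq, hz], rfl⟩
    have hle : ‖R z‖ ≤ dualNorm ν R := le_csSup hbdd hmem
    have hRz : ‖R z‖ = (ν y)⁻¹ * ‖R y‖ := by
      rw [hz_def, map_smul, smul_eq_mul, norm_mul, norm_inv, Complex.norm_real,
        Real.norm_eq_abs, abs_of_nonneg hν.le]
    rw [hRz] at hle
    rw [inv_mul_le_iff₀ hν] at hle
    linarith [hle]

/-- if there is a q-Bessel sequence `{fᵢ}` for the dual with bound `B`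
reconstructing every `x` with `∑ᵢ |Tᵢ(x)|^p < ∞`, then `{Tᵢ}` satisfies the lower
p-frame condition with bound `B^(-p/q)` on such `x`. -/
theorem lower_pframe_of_qBessel_reconstruction {X : Type*} [AddCommGroup X]
    [Module ℂ X] (ν : Seminorm ℂ X)
    {I : Type*} [Countable I] (p q : ℝ) (hp : 1 < p) (hpq : 1 / p + 1 / q = 1)
    (T : I → X →ₗ[ℂ] ℂ) (hTb : ∀ i, IsBddFunctional ν (T i))
    (f : I → X) (B : ℝ) (hB : 0 < B)
    (hf : ∀ R : X →ₗ[ℂ] ℂ, IsBddFunctional ν R →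
      Summable (fun i => ‖R (f i)‖ ^ q) ∧
      ∑' i, ‖R (f i)‖ ^ q ≤ B * dualNorm ν R ^ q)
    (hdual : ∀ x : X, ν x = sSup ((fun R : X →ₗ[ℂ] ℂ => ‖R x‖) ''
      {R | IsBddFunctional ν R ∧ dualNorm ν R ≤ 1}))
    (hrecon : ∀ x : X, Summable (fun i => ‖T i x‖ ^ p) →
      Tendsto (fun s : Finset I => ν (x - ∑ i ∈ s, T i x • f i)) atTop (nhds 0)) :
    ∀ x : X, Summable (fun i => ‖T i x‖ ^ p) →
      B ^ (-(p / q)) * ν x ^ p ≤ ∑' i, ‖T i x‖ ^ p := by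
  intro x hx
  have hcq : Real.HolderConjugate p q := Real.holderConjugate_iff.mpr ⟨hp, by rw [← one_div, ← one_div]; exact hpq⟩
  have hp0 : 0 < p := hcq.pos
  have hq0 : 0 < q := hcq.symm.pos
  set S := ∑' i, ‖T i x‖ ^ p with hS_def
  have hSnn : 0 ≤ S := tsum_nonneg fun i => Real.rpow_nonneg (norm_nonneg _) _
  set C := S ^ (1 / p) * B ^ (1 / q) with hC_def
  have hCnn : 0 ≤ C := mul_nonneg (Real.rpow_nonneg hSnn _) (Real.rpow_nonneg hB.le _)
  -- Step B : ν x ≤ C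
  have hνC : ν x ≤ C := by
    rw [hdual x]
    apply Real.sSup_le _ hCnn
    rintro _ ⟨R, ⟨hRb, hR1⟩, rfl⟩
    obtain ⟨hdN0, hdN⟩ := dualNorm_facts ν hRb
    -- per-finset bound
    have hbound : ∀ s : Finset I, ‖R (∑ i ∈ s, T i x • f i)‖ ≤ C := by
      intro s
      have heq : R (∑ i ∈ s, T i x • f i) = ∑ i ∈ s, T i x * R (f i) := by
        rw [map_sum]
        exact Finset.sum_congr rfl fun i _ => by rw [map_smul, smul_eq_mul]
      calc ‖R (∑ i ∈ s, T i x • f i)‖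
          = ‖∑ i ∈ s, T i x * R (f i)‖ := by rw [heq]
        _ ≤ ∑ i ∈ s, ‖T i x‖ * ‖R (f i)‖ := by
            refine (norm_sum_le _ _).trans_eq ?_
            exact Finset.sum_congr rfl fun i _ => norm_mul _ _
        _ ≤ (∑ i ∈ s, ‖T i x‖ ^ p) ^ (1 / p) * (∑ i ∈ s, ‖R (f i)‖ ^ q) ^ (1 / q) :=
            Real.inner_le_Lp_mul_Lq_of_nonneg s hcq (fun i _ => norm_nonneg _)
              (fun i _ => norm_nonneg _)
        _ ≤ C := by
            rw [hC_def]
            have h1 : (∑ i ∈ s, ‖T i x‖ ^ p) ^ (1 / p) ≤ S ^ (1 / p) := by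
              apply Real.rpow_le_rpow (Finset.sum_nonneg fun i _ =>
                Real.rpow_nonneg (norm_nonneg _) _) _ (by positivity)
              exact Summable.sum_le_tsum s (fun i _ => Real.rpow_nonneg (norm_nonneg _) _) hx
            have h2 : (∑ i ∈ s, ‖R (f i)‖ ^ q) ^ (1 / q) ≤ B ^ (1 / q) := by
              apply Real.rpow_le_rpow (Finset.sum_nonneg fun i _ =>
                Real.rpow_nonneg (norm_nonneg _) _) _ (by positivity)
              calc ∑ i ∈ s, ‖R (f i)‖ ^ q
                  ≤ ∑' i, ‖R (f i)‖ ^ q :=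
                    Summable.sum_le_tsum s (fun i _ => Real.rpow_nonneg (norm_nonneg _) _)
                      (hf R hRb).1
                _ ≤ B * dualNorm ν R ^ q := (hf R hRb).2
                _ ≤ B * 1 := by
                    refine mul_le_mul_of_nonneg_left ?_ hB.le
                    exact Real.rpow_le_one hdN0 hR1 hq0.le
                _ = B := mul_one B
            exact mul_le_mul h1 h2 (Real.rpow_nonneg (Finset.sum_nonneg fun i _ =>
              Real.rpow_nonneg (norm_nonneg _) _) _) (Real.rpow_nonneg hSnn _)
    -- R of the partial sums tends to R x
    have htend0 : Tendsto (fun s : Finset I =>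
        ‖R (∑ i ∈ s, T i x • f i) - R x‖) atTop (nhds 0) := by
      have hb : ∀ s : Finset I, ‖R (∑ i ∈ s, T i x • f i) - R x‖ ≤
          dualNorm ν R * ν (x - ∑ i ∈ s, T i x • f i) := by
        intro s
        rw [← norm_neg, neg_sub, ← map_sub]
        exact hdN _
      have hlim : Tendsto (fun s : Finset I =>
          dualNorm ν R * ν (x - ∑ i ∈ s, T i x • f i)) atTop (nhds 0) := by
        have := (hrecon x hx).const_mul (dualNorm ν R)
        rwa [mul_zero] at this
      exact squeeze_zero (fun s => norm_nonneg _) hb hlim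
    have htend : Tendsto (fun s : Finset I => ‖R (∑ i ∈ s, T i x • f i)‖)
        atTop (nhds ‖R x‖) := by
      have : Tendsto (fun s : Finset I => R (∑ i ∈ s, T i x • f i)) atTop (nhds (R x)) :=
        tendsto_iff_norm_sub_tendsto_zero.mpr htend0
      exact this.norm
    exact le_of_tendsto htend (Eventually.of_forall hbound)
  -- Step C : conclude
  have hpow : ν x ^ p ≤ C ^ p :=
    Real.rpow_le_rpow (apply_nonneg ν x) hνC hp0.le
  have hCp : C ^ p = S * B ^ (p / q) := by
    rw [hC_def, Real.mul_rpow (Real.rpow_nonneg hSnn _) (Real.rpow_nonneg hB.le _), ← Real.rpow_mul hSnn, ← Real.rpow_mul hB.le]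
    rw [one_div_mul_cancel hp0.ne', Real.rpow_one, one_div, inv_mul_eq_div]
  rw [hCp] at hpow
  calc B ^ (-(p / q)) * ν x ^ p ≤ B ^ (-(p / q)) * (S * B ^ (p / q)) :=
        mul_le_mul_of_nonneg_left hpow (Real.rpow_nonneg hB.le _)
    _ = S * (B ^ (-(p / q)) * B ^ (p / q)) := by ring
    _ = S := by rw [← Real.rpow_add hB, neg_add_cancel, Real.rpow_zero, mul_one]
end

section
/- Let {Tᵢ}_{i∈I} be a p-Bessel sequence for X with bound B and let {fᵢ}_{i∈I} ⊆ X be a q-Bessel sequence for the dual such that x = Σᵢ Tᵢ(x)·fᵢ for every x ∈ X (convergence with respect to the seminorm). Then {fᵢ}_{i∈I} is a q-frame for the dual with lower bound B^{−q/p}; that is, B^{−q/p}·‖R‖^q ≤ Σᵢ |R(fᵢ)|^q for every bounded linear functional R on X. -/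
open Filter

/-- if `{Tᵢ}` is a p-Bessel sequence with bound `B` and `{fᵢ}` is a
q-Bessel sequence for the dual with `x = ∑ᵢ Tᵢ(x)·fᵢ` for every `x`, then `{fᵢ}`
is a q-frame for the dual with lower bound `B^(-q/p)`. -/
theorem qframe_lower_bound_of_reconstruction {X : Type*} [AddCommGroup X]
    [Module ℂ X] (ν : Seminorm ℂ X)
    {I : Type*} [Countable I] (p q : ℝ) (hp : 1 < p) (hpq : 1 / p + 1 / q = 1)
    (T : I → X →ₗ[ℂ] ℂ) (hTb : ∀ i, IsBddFunctional ν (T i))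
    (B : ℝ) (hB : 0 < B)
    (hT : ∀ x : X, Summable (fun i => ‖T i x‖ ^ p) ∧
      ∑' i, ‖T i x‖ ^ p ≤ B * ν x ^ p)
    (f : I → X) (C : ℝ) (hC : 0 < C)
    (hf : ∀ R : X →ₗ[ℂ] ℂ, IsBddFunctional ν R →
      Summable (fun i => ‖R (f i)‖ ^ q) ∧
      ∑' i, ‖R (f i)‖ ^ q ≤ C * dualNorm ν R ^ q)
    (hrecon : ∀ x : X,
      Tendsto (fun s : Finset I => ν (x - ∑ i ∈ s, T i x • f i)) atTop (nhds 0)) :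
    ∀ R : X →ₗ[ℂ] ℂ, IsBddFunctional ν R →
      B ^ (-(q / p)) * dualNorm ν R ^ q ≤ ∑' i, ‖R (f i)‖ ^ q := by
  intro R hR
  have hpq' : p.HolderConjugate q := Real.holderConjugate_iff.mpr ⟨hp, by rw [← one_div, ← one_div]; exact hpq⟩
  set S : ℝ := ∑' i, ‖R (f i)‖ ^ q with hS
  have hSnn : 0 ≤ S := tsum_nonneg fun i => by positivity
  obtain ⟨M, hM0, hM⟩ := hR
  -- key bound : for every x with ν x ≤ 1, ‖R x‖ ≤ B^(1/p) * S^(1/q)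
  have key : ∀ x : X, ν x ≤ 1 → ‖R x‖ ≤ B ^ (1/p) * S ^ (1/q) := by
    intro x hx
    -- R x is the sum of T i x * R (f i)
    have hsum : HasSum (fun i => T i x * R (f i)) (R x) := by
      rw [HasSum]
      have h1 : Tendsto (fun s : Finset I => R x - R (∑ i ∈ s, T i x • f i))
          atTop (nhds 0) := by
        have h2 : ∀ s : Finset I, ‖R x - R (∑ i ∈ s, T i x • f i)‖
            ≤ M * ν (x - ∑ i ∈ s, T i x • f i) := fun s => by
          rw [← map_sub]; exact hM _
        have h3 : Tendsto (fun s : Finset I =>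
            M * ν (x - ∑ i ∈ s, T i x • f i)) atTop (nhds 0) := by
          simpa using (hrecon x).const_mul M
        rw [tendsto_zero_iff_norm_tendsto_zero]
        exact squeeze_zero (fun s => norm_nonneg _) h2 h3
      have h4 : Tendsto (fun s : Finset I => R (∑ i ∈ s, T i x • f i))
          atTop (nhds (R x)) := by
        have := h1.const_sub (R x)
        simpa using this
      convert h4 using 2 with s
      simp [map_sum, smul_eq_mul]
      rfl
    have hTsum := (hT x).1
    have hfsum := (hf R ⟨M, hM0, hM⟩).1
    have hHolder := Real.summable_and_inner_le_Lp_mul_Lq_tsum_of_nonneg hpq'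
      (f := fun i => ‖T i x‖) (g := fun i => ‖R (f i)‖)
      (fun i => norm_nonneg _) (fun i => norm_nonneg _) hTsum hfsum
    have hmulsum : Summable (fun i => ‖T i x‖ * ‖R (f i)‖) := hHolder.1
    have h5 : ‖R x‖ ≤ ∑' i, ‖T i x‖ * ‖R (f i)‖ := by
      calc ‖R x‖ = ‖∑' i, T i x * R (f i)‖ := by rw [hsum.tsum_eq]
        _ ≤ ∑' i, ‖T i x * R (f i)‖ :=
            norm_tsum_le_tsum_norm (by simpa [norm_mul] using hmulsum)
        _ = ∑' i, ‖T i x‖ * ‖R (f i)‖ := by simp [norm_mul]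
    have h6 : (∑' i, ‖T i x‖ ^ p) ^ (1/p) ≤ B ^ (1/p) := by
      have h7 : ∑' i, ‖T i x‖ ^ p ≤ B := by
        calc ∑' i, ‖T i x‖ ^ p ≤ B * ν x ^ p := (hT x).2
          _ ≤ B * 1 := by
              have : ν x ^ p ≤ 1 :=
                Real.rpow_le_one (apply_nonneg ν x) hx (le_of_lt (lt_trans zero_lt_one hp))
              nlinarith
          _ = B := mul_one B
      exact Real.rpow_le_rpow (tsum_nonneg fun i => by positivity) h7
        hpq'.one_div_nonneg
    calc ‖R x‖ ≤ ∑' i, ‖T i x‖ * ‖R (f i)‖ := h5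
      _ ≤ (∑' i, ‖T i x‖ ^ p) ^ (1/p) * S ^ (1/q) := hHolder.2
      _ ≤ B ^ (1/p) * S ^ (1/q) := by gcongr
  -- hence dualNorm ν R ≤ B^(1/p) * S^(1/q)
  have hdn : dualNorm ν R ≤ B ^ (1/p) * S ^ (1/q) := by
    apply Real.sSup_le
    · rintro r ⟨x, hx, rfl⟩
      exact key x hx
    · positivity
  have hdn0 : 0 ≤ dualNorm ν R := by
    have hbdd : BddAbove ((fun x => ‖R x‖) '' {x | ν x ≤ 1}) :=
      ⟨B ^ (1/p) * S ^ (1/q), by rintro r ⟨x, hx, rfl⟩; exact key x hx⟩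
    have h0 : (0:ℝ) ∈ (fun x => ‖R x‖) '' {x | ν x ≤ 1} :=
      ⟨0, by simp, by simp⟩
    exact le_csSup hbdd h0
  have hq0 : 0 < q := hpq'.symm.pos
  have hpow : dualNorm ν R ^ q ≤ B ^ (q/p) * S := by
    calc dualNorm ν R ^ q ≤ (B ^ (1/p) * S ^ (1/q)) ^ q :=
          Real.rpow_le_rpow hdn0 hdn hq0.le
      _ = (B ^ (1/p)) ^ q * (S ^ (1/q)) ^ q :=
          Real.mul_rpow (by positivity) (by positivity)
      _ = B ^ (q/p) * S := by
          rw [← Real.rpow_mul hB.le, ← Real.rpow_mul hSnn, one_div_mul_eq_div,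
            one_div_mul_cancel hq0.ne', Real.rpow_one]
  have hBpos : (0:ℝ) < B ^ (q/p) := Real.rpow_pos_of_pos hB _
  have := mul_le_mul_of_nonneg_left hpow (le_of_lt (Real.rpow_pos_of_pos hB (-(q/p))))
  calc B ^ (-(q/p)) * dualNorm ν R ^ q ≤ B ^ (-(q/p)) * (B ^ (q/p) * S) := this
    _ = S := by
        rw [← mul_assoc, ← Real.rpow_add hB, neg_add_cancel, Real.rpow_zero, one_mul]
end

section
/- Let {Tᵢ}_{i∈ℕ} be a p-Bessel sequence for X with bound B and let {fᵢ}_{i∈ℕ} ⊆ X be a q-Bessel sequence for the dual such that x = Σᵢ Tᵢ(x)·fᵢ for every x ∈ X (convergence with respect to the seminorm). Then every bounded linear functional R on X can be reconstructed as R = Σᵢ R(fᵢ)·Tᵢ with convergence in the dual norm; that is, sup{|R(x) − Σ_{i=1}^{k} R(fᵢ)·Tᵢ(x)| : x ∈ X, ‖x‖ ≤ 1} → 0 as k → ∞. -/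
open Filter

/-- if `{Tᵢ}` is a p-Bessel sequence with bound `B` and `{fᵢ}` is a
q-Bessel sequence for the dual with `x = ∑ᵢ Tᵢ(x)·fᵢ` for every `x`, then every
bounded linear functional `R` satisfies `R = ∑ᵢ R(fᵢ)·Tᵢ` in the dual norm, i.e.
`sup {|R(x) − ∑_{i<k} R(fᵢ)·Tᵢ(x)| : ν x ≤ 1} → 0` as `k → ∞`. -/
theorem dual_reconstruction {X : Type*} [AddCommGroup X]
    [Module ℂ X] (ν : Seminorm ℂ X)
    (p q : ℝ) (hp : 1 < p) (hpq : 1 / p + 1 / q = 1)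
    (T : ℕ → X →ₗ[ℂ] ℂ) (hTb : ∀ i, IsBddFunctional ν (T i))
    (B : ℝ) (hB : 0 < B)
    (hT : ∀ x : X, Summable (fun i => ‖T i x‖ ^ p) ∧
      ∑' i, ‖T i x‖ ^ p ≤ B * ν x ^ p)
    (f : ℕ → X) (C : ℝ) (hC : 0 < C)
    (hf : ∀ R : X →ₗ[ℂ] ℂ, IsBddFunctional ν R →
      Summable (fun i => ‖R (f i)‖ ^ q) ∧
      ∑' i, ‖R (f i)‖ ^ q ≤ C * dualNorm ν R ^ q)
    (hrecon : ∀ x : X,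
      Tendsto (fun k => ν (x - ∑ i ∈ Finset.range k, T i x • f i)) atTop (nhds 0)) :
    ∀ R : X →ₗ[ℂ] ℂ, IsBddFunctional ν R →
      Tendsto (fun k => sSup ((fun x : X =>
          ‖R x - ∑ i ∈ Finset.range k, R (f i) * T i x‖) '' {x | ν x ≤ 1}))
        atTop (nhds 0) := by
  intro R hR
  obtain ⟨M, hM0, hM⟩ := hR
  have hp0 : 0 < p := lt_trans one_pos hp
  have hq1 : 0 < 1 / q := by
    have h1 : 1 / p < 1 := by rw [div_lt_one hp0]; exact hp
    linarith
  have hq0 : 0 < q := by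
    rw [one_div] at hq1; exact inv_pos.mp hq1
  have hpq' : Real.HolderConjugate p q := Real.holderConjugate_iff.mpr ⟨hp, by simpa [one_div] using hpq⟩
  -- summability
  have hRf : Summable (fun i => ‖R (f i)‖ ^ q) := (hf R ⟨M, hM0, hM⟩).1
  -- tail sums
  set ε : ℕ → ℝ := fun k => ∑' i, ‖R (f (i + k))‖ ^ q with hε
  have hεnonneg : ∀ k, 0 ≤ ε k := fun k =>
    tsum_nonneg fun i => Real.rpow_nonneg (norm_nonneg _) q
  have hεtendsto : Tendsto ε atTop (nhds 0) := by
    simpa [hε] using tendsto_sum_nat_add (fun i => ‖R (f i)‖ ^ q)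
  -- partial sums tend to R x
  have hPlim : ∀ x : X, Tendsto (fun k => ∑ i ∈ Finset.range k, R (f i) * T i x)
      atTop (nhds (R x)) := by
    intro x
    have key : ∀ k, ‖R x - ∑ i ∈ Finset.range k, R (f i) * T i x‖
        ≤ M * ν (x - ∑ i ∈ Finset.range k, T i x • f i) := by
      intro k
      have : R x - ∑ i ∈ Finset.range k, R (f i) * T i x
          = R (x - ∑ i ∈ Finset.range k, T i x • f i) := by
        rw [map_sub, map_sum]
        simp [mul_comm, smul_eq_mul]
      rw [this]; exact hM _
    have h0 : Tendsto (fun k => ‖R x - ∑ i ∈ Finset.range k, R (f i) * T i x‖)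
        atTop (nhds 0) := by
      apply squeeze_zero (fun k => norm_nonneg _) key
      simpa using (hrecon x).const_mul M
    rw [tendsto_iff_norm_sub_tendsto_zero]
    simpa [norm_sub_rev] using h0
  -- key uniform bound
  have key : ∀ k, ∀ x : X, ν x ≤ 1 →
      ‖R x - ∑ i ∈ Finset.range k, R (f i) * T i x‖ ≤ ε k ^ (1 / q) * B ^ (1 / p) := by
    intro k x hx
    have hTsum : Summable (fun i => ‖T i x‖ ^ p) := (hT x).1
    have hbound : ∀ m, k ≤ m →
        ‖(∑ i ∈ Finset.range m, R (f i) * T i x) - ∑ i ∈ Finset.range k, R (f i) * T i x‖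
          ≤ ε k ^ (1 / q) * B ^ (1 / p) := by
      intro m hkm
      rw [← Finset.sum_Ico_eq_sub _ hkm]
      calc ‖∑ i ∈ Finset.Ico k m, R (f i) * T i x‖
          ≤ ∑ i ∈ Finset.Ico k m, ‖R (f i) * T i x‖ := norm_sum_le _ _
        _ = ∑ i ∈ Finset.Ico k m, ‖R (f i)‖ * ‖T i x‖ := by simp [norm_mul]
        _ ≤ (∑ i ∈ Finset.Ico k m, ‖R (f i)‖ ^ q) ^ (1 / q)
            * (∑ i ∈ Finset.Ico k m, ‖T i x‖ ^ p) ^ (1 / p) := by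
            have := Real.inner_le_Lp_mul_Lq_of_nonneg (Finset.Ico k m)
              (f := fun i => ‖T i x‖) (g := fun i => ‖R (f i)‖) hpq'
              (fun i _ => norm_nonneg _) (fun i _ => norm_nonneg _)
            calc ∑ i ∈ Finset.Ico k m, ‖R (f i)‖ * ‖T i x‖
                = ∑ i ∈ Finset.Ico k m, ‖T i x‖ * ‖R (f i)‖ := by
                  simp [mul_comm]
              _ ≤ (∑ i ∈ Finset.Ico k m, ‖T i x‖ ^ p) ^ (1 / p)
                  * (∑ i ∈ Finset.Ico k m, ‖R (f i)‖ ^ q) ^ (1 / q) := this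
              _ = _ := mul_comm _ _
        _ ≤ ε k ^ (1 / q) * B ^ (1 / p) := by
            apply mul_le_mul
            · apply Real.rpow_le_rpow (Finset.sum_nonneg fun i _ =>
                Real.rpow_nonneg (norm_nonneg _) q) _ (le_of_lt hq1)
              rw [Finset.sum_Ico_eq_sum_range]
              have hsum' : Summable (fun i => ‖R (f (i + k))‖ ^ q) :=
                (summable_nat_add_iff k).2 hRf
              calc ∑ i ∈ Finset.range (m - k), ‖R (f (k + i))‖ ^ q
                  = ∑ i ∈ Finset.range (m - k), ‖R (f (i + k))‖ ^ q := by
                    refine Finset.sum_congr rfl fun i _ => by rw [add_comm]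
                _ ≤ ε k := hsum'.sum_le_tsum _ (fun i _ =>
                    Real.rpow_nonneg (norm_nonneg _) q)
            · apply Real.rpow_le_rpow (Finset.sum_nonneg fun i _ =>
                Real.rpow_nonneg (norm_nonneg _) p) _ (by positivity : (0:ℝ) ≤ 1/p)
              calc ∑ i ∈ Finset.Ico k m, ‖T i x‖ ^ p
                  ≤ ∑' i, ‖T i x‖ ^ p := hTsum.sum_le_tsum _ (fun i _ =>
                    Real.rpow_nonneg (norm_nonneg _) p)
                _ ≤ B * ν x ^ p := (hT x).2
                _ ≤ B * 1 := by
                    have : ν x ^ p ≤ 1 :=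
                      Real.rpow_le_one (apply_nonneg ν x) hx (le_of_lt hp0)
                    nlinarith
                _ = B := mul_one B
            · exact Real.rpow_nonneg (Finset.sum_nonneg fun i _ =>
                Real.rpow_nonneg (norm_nonneg _) p) _
            · exact Real.rpow_nonneg (hεnonneg k) _
    have hlim : Tendsto (fun m =>
        ‖(∑ i ∈ Finset.range m, R (f i) * T i x) - ∑ i ∈ Finset.range k, R (f i) * T i x‖)
        atTop (nhds ‖R x - ∑ i ∈ Finset.range k, R (f i) * T i x‖) :=
      ((hPlim x).sub_const _).norm
    exact le_of_tendsto hlim (eventually_atTop.2 ⟨k, hbound⟩)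
  -- conclude via squeeze on the sSup
  have hmem0 : ∀ k, (0:ℝ) ∈ ((fun x : X =>
      ‖R x - ∑ i ∈ Finset.range k, R (f i) * T i x‖) '' {x | ν x ≤ 1}) := by
    intro k
    refine ⟨0, by simp [Set.mem_setOf_eq, map_zero], by simp⟩
  have hbdd : ∀ k, BddAbove ((fun x : X =>
      ‖R x - ∑ i ∈ Finset.range k, R (f i) * T i x‖) '' {x | ν x ≤ 1}) := by
    intro k
    refine ⟨ε k ^ (1 / q) * B ^ (1 / p), ?_⟩
    rintro y ⟨x, hx, rfl⟩
    exact key k x hx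
  apply squeeze_zero (g := fun k => ε k ^ (1 / q) * B ^ (1 / p))
  · intro k
    exact le_csSup (hbdd k) (hmem0 k)
  · intro k
    refine csSup_le ⟨0, hmem0 k⟩ ?_
    rintro y ⟨x, hx, rfl⟩
    exact key k x hx
  · have h1 : Tendsto (fun k => ε k ^ (1 / q)) atTop (nhds 0) := by
      have := hεtendsto.rpow_const (p := 1 / q) (Or.inr (le_of_lt hq1))
      rw [Real.zero_rpow (by simpa [one_div] using ne_of_gt hq1)] at this; exact this
    simpa using h1.mul_const (B ^ (1 / p))
end

section
/- Let {Tᵢ}_{i∈I} be a p-Bessel sequence for X with bound B. Then the synthesis map is well defined and bounded with norm at most B^{1/p}: for every sequence {dᵢ} ∈ ℓᵠ and every x ∈ X, the series Σᵢ dᵢ·Tᵢ(x) converges, and |Σᵢ dᵢ·Tᵢ(x)| ≤ B^{1/p}·(Σᵢ |dᵢ|^q)^{1/q}·‖x‖. -/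
/-- the synthesis map of a p-Bessel sequence with bound `B` is well
defined and bounded by `B^(1/p)`: for `{dᵢ} ∈ ℓᵠ` and `x ∈ X`, the series
`∑ᵢ dᵢ·Tᵢ(x)` converges and `|∑ᵢ dᵢ·Tᵢ(x)| ≤ B^(1/p)·(∑ᵢ|dᵢ|^q)^(1/q)·ν x`. -/
theorem synthesis_welldefined_bounded {X : Type*} [AddCommGroup X] [Module ℂ X]
    (ν : Seminorm ℂ X) {I : Type*} [Countable I]
    (p q : ℝ) (hp : 1 < p) (hpq : 1 / p + 1 / q = 1)
    (T : I → X →ₗ[ℂ] ℂ)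
    (hTb : ∀ i, ∃ M : ℝ, 0 ≤ M ∧ ∀ x : X, ‖T i x‖ ≤ M * ν x)
    (B : ℝ) (hB : 0 < B)
    (hT : ∀ x : X, Summable (fun i => ‖T i x‖ ^ p) ∧
      ∑' i, ‖T i x‖ ^ p ≤ B * ν x ^ p) :
    ∀ d : I → ℂ, Summable (fun i => ‖d i‖ ^ q) → ∀ x : X,
      Summable (fun i => d i * T i x) ∧
      ‖∑' i, d i * T i x‖ ≤ B ^ (1 / p) * (∑' i, ‖d i‖ ^ q) ^ (1 / q) * ν x := by
  intro d hd x
  have hpq' : p.HolderConjugate q := by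
    rw [Real.holderConjugate_iff]
    constructor
    · exact hp
    · simpa [one_div] using hpq
  have hH := Real.summable_and_inner_le_Lp_mul_Lq_tsum_of_nonneg hpq'
    (fun i => norm_nonneg (T i x)) (fun i => norm_nonneg (d i)) (hT x).1 hd
  have hsum : Summable (fun i => d i * T i x) := by
    refine Summable.of_norm ?_
    have := hH.1
    simpa [norm_mul, mul_comm] using this
  refine ⟨hsum, ?_⟩
  calc ‖∑' i, d i * T i x‖ ≤ ∑' i, ‖d i * T i x‖ := norm_tsum_le_tsum_norm (by
        have := hH.1
        simpa [norm_mul, mul_comm] using this)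
    _ = ∑' i, ‖T i x‖ * ‖d i‖ := by simp [norm_mul, mul_comm]
    _ ≤ (∑' i, ‖T i x‖ ^ p) ^ (1 / p) * (∑' i, ‖d i‖ ^ q) ^ (1 / q) := hH.2
    _ ≤ (B * ν x ^ p) ^ (1 / p) * (∑' i, ‖d i‖ ^ q) ^ (1 / q) := by
        have h1 : (0:ℝ) ≤ ∑' i, ‖T i x‖ ^ p := tsum_nonneg fun i => by positivity
        have h3 := Real.rpow_le_rpow h1 (hT x).2 (by positivity : (0:ℝ) ≤ 1/p)
        have h2 : (0:ℝ) ≤ (∑' i, ‖d i‖ ^ q) ^ (1 / q) :=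
          Real.rpow_nonneg (tsum_nonneg fun i => by positivity) _
        exact mul_le_mul_of_nonneg_right h3 h2
    _ = B ^ (1 / p) * (∑' i, ‖d i‖ ^ q) ^ (1 / q) * ν x := by
        rw [Real.mul_rpow hB.le (by positivity)]
        rw [← Real.rpow_mul (apply_nonneg ν x)]
        rw [mul_one_div_cancel (by positivity : p ≠ 0), Real.rpow_one]
        ring
end

section
/- Let {Tᵢ}_{i∈I} be bounded linear functionals on X and let B > 0. Suppose that for every sequence {dᵢ} ∈ ℓᵠ and every x ∈ X the series Σᵢ dᵢ·Tᵢ(x) converges, and |Σᵢ dᵢ·Tᵢ(x)| ≤ B^{1/p}·(Σᵢ |dᵢ|^q)^{1/q}·‖x‖. Then {Tᵢ}_{i∈I} is a p-Bessel sequence for X with bound B: Σᵢ |Tᵢ(x)|^p ≤ B‖x‖^p for every x ∈ X (the series being convergent). -/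
/-- converse of the synthesis bound: if for every `{dᵢ} ∈ ℓᵠ` and
`x ∈ X` the series `∑ᵢ dᵢ·Tᵢ(x)` converges with
`|∑ᵢ dᵢ·Tᵢ(x)| ≤ B^(1/p)·(∑ᵢ|dᵢ|^q)^(1/q)·ν x`, then `{Tᵢ}` is a p-Bessel
sequence with bound `B`. -/
theorem pBessel_of_synthesis_bounded {X : Type*} [AddCommGroup X] [Module ℂ X]
    (ν : Seminorm ℂ X) {I : Type*} [Countable I]
    (p q : ℝ) (hp : 1 < p) (hpq : 1 / p + 1 / q = 1)
    (T : I → X →ₗ[ℂ] ℂ)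
    (hTb : ∀ i, ∃ M : ℝ, 0 ≤ M ∧ ∀ x : X, ‖T i x‖ ≤ M * ν x)
    (B : ℝ) (hB : 0 < B)
    (hsynth : ∀ d : I → ℂ, Summable (fun i => ‖d i‖ ^ q) → ∀ x : X,
      Summable (fun i => d i * T i x) ∧
      ‖∑' i, d i * T i x‖ ≤ B ^ (1 / p) * (∑' i, ‖d i‖ ^ q) ^ (1 / q) * ν x) :
    ∀ x : X, Summable (fun i => ‖T i x‖ ^ p) ∧
      ∑' i, ‖T i x‖ ^ p ≤ B * ν x ^ p := by
  classical
  have hpq' : Real.HolderConjugate p q := Real.holderConjugate_iff.mpr ⟨hp, by rw [← one_div, ← one_div]; exact hpq⟩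
  have hq0 : 0 < q := hpq'.symm.pos
  have hp0 : 0 < p := hpq'.pos
  intro x
  set g : I → ℝ := fun i => ‖T i x‖ ^ p with hg
  have hg0 : ∀ i, 0 ≤ g i := fun i => Real.rpow_nonneg (norm_nonneg _) p
  have key : ∀ F : Finset I, ∑ i ∈ F, g i ≤ B * ν x ^ p := by
    intro F
    set d : I → ℂ := fun i =>
      if i ∈ F then (starRingEnd ℂ) (T i x) * ((‖T i x‖ ^ (p - 2) : ℝ) : ℂ) else 0 with hd
    have hdq : ∀ i, ‖d i‖ ^ q = if i ∈ F then g i else 0 := by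
      intro i
      by_cases hi : i ∈ F
      · simp only [hd, hi, if_pos]
        rcases eq_or_ne (T i x) 0 with h0 | h0
        · simp [h0, hg, Real.zero_rpow hq0.ne', Real.zero_rpow hp0.ne']
        · have hn : 0 < ‖T i x‖ := norm_pos_iff.2 h0
          rw [norm_mul, RCLike.norm_conj, Complex.norm_real, Real.norm_eq_abs,
            abs_of_nonneg (Real.rpow_nonneg (norm_nonneg _) _)]
          rw [show ‖T i x‖ * ‖T i x‖ ^ (p - 2) = ‖T i x‖ ^ (p - 1) by
            nth_rewrite 1 [← Real.rpow_one ‖T i x‖]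
            rw [← Real.rpow_add hn]; ring_nf]
          rw [← Real.rpow_mul (norm_nonneg _), hpq'.sub_one_mul_conj]
      · simp [hd, hi, Real.zero_rpow hq0.ne']
    have hdsum : Summable (fun i => ‖d i‖ ^ q) := by
      apply summable_of_ne_finset_zero (s := F)
      intro i hi
      rw [hdq i, if_neg hi]
    obtain ⟨hs1, hs2⟩ := hsynth d hdsum x
    have hdT : ∀ i, d i * T i x = if i ∈ F then ((g i : ℝ) : ℂ) else 0 := by
      intro i
      by_cases hi : i ∈ F
      · simp only [hd, hi, if_pos]
        rcases eq_or_ne (T i x) 0 with h0 | h0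
        · simp [h0, hg, Real.zero_rpow hp0.ne']
        · have hn : 0 < ‖T i x‖ := norm_pos_iff.2 h0
          have hc : (starRingEnd ℂ) (T i x) * ((‖T i x‖ ^ (p - 2) : ℝ) : ℂ) * T i x
              = ((‖T i x‖ ^ 2 * ‖T i x‖ ^ (p - 2) : ℝ) : ℂ) := by
            rw [Complex.ofReal_mul]
            push_cast
            rw [← Complex.mul_conj']
            ring
          rw [hc, show ‖T i x‖ ^ 2 * ‖T i x‖ ^ (p - 2) = ‖T i x‖ ^ p by
            rw [← Real.rpow_natCast _ 2, ← Real.rpow_add hn]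
            norm_num]
      · simp [hd, hi]
    have htsum : ∑' i, d i * T i x = ((∑ i ∈ F, g i : ℝ) : ℂ) := by
      rw [tsum_eq_sum (s := F) (fun i hi => by rw [hdT i, if_neg hi]), Complex.ofReal_sum]
      exact Finset.sum_congr rfl fun i hi => by rw [hdT i, if_pos hi]
    have htq : ∑' i, ‖d i‖ ^ q = ∑ i ∈ F, g i := by
      rw [tsum_eq_sum (s := F) (fun i hi => by rw [hdq i, if_neg hi])]
      exact Finset.sum_congr rfl fun i hi => by rw [hdq i, if_pos hi]
    set s := ∑ i ∈ F, g i with hsdef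
    have hs0 : 0 ≤ s := Finset.sum_nonneg fun i _ => hg0 i
    rw [htsum, htq, Complex.norm_real, Real.norm_eq_abs, abs_of_nonneg hs0] at hs2
    rcases eq_or_lt_of_le hs0 with h0 | h0
    · rw [← h0]
      positivity
    · have hsplit : s = s ^ (1 / p) * s ^ (1 / q) := by
        rw [← Real.rpow_add h0, hpq, Real.rpow_one]
      have hsq : 0 < s ^ (1 / q) := Real.rpow_pos_of_pos h0 _
      nth_rewrite 1 [hsplit] at hs2
      rw [show B ^ (1 / p) * s ^ (1 / q) * ν x = B ^ (1 / p) * ν x * s ^ (1 / q) by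
        ring] at hs2
      have h1 : s ^ (1 / p) ≤ B ^ (1 / p) * ν x := le_of_mul_le_mul_right hs2 hsq
      have h2 : (s ^ (1 / p)) ^ p ≤ (B ^ (1 / p) * ν x) ^ p :=
        Real.rpow_le_rpow (Real.rpow_nonneg hs0 _) h1 hp0.le
      rw [← Real.rpow_mul hs0, one_div_mul_cancel hp0.ne', Real.rpow_one,
        Real.mul_rpow (Real.rpow_nonneg hB.le _) (apply_nonneg ν x),
        ← Real.rpow_mul hB.le, one_div_mul_cancel hp0.ne', Real.rpow_one] at h2
      exact h2
  have hsum : Summable g := summable_of_sum_le hg0 key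
  exact ⟨hsum, Summable.tsum_le_of_sum_le hsum key⟩
end

section
/- Let {Tᵢ}_{i∈I} be a p-frame for X with bounds A, B, let R be a nonzero bounded linear functional on X with ‖R‖ > 0, and let {cᵢ}_{i∈I} be scalars with Σᵢ |cᵢ|^p < A/‖R‖^p. Then the perturbed family {Tᵢ + cᵢ·R}_{i∈I} is a p-frame for X; in particular, with M = (Σᵢ |cᵢ|^p)·‖R‖^p < A, it admits lower frame bound (1 − (M/A)^{1/p})^p·A and upper frame bound (M^{1/p} + B^{1/p})^p. -/
/-- The dual norm bounds `R`. -/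
lemma dualNorm_bound {X : Type*} [AddCommGroup X] [Module ℂ X]
    (ν : Seminorm ℂ X) (R : X →ₗ[ℂ] ℂ) (hR : IsBddFunctional ν R)
    (hK0 : 0 ≤ dualNorm ν R) (x : X) : ‖R x‖ ≤ dualNorm ν R * ν x := by
  obtain ⟨M, hM0, hM⟩ := hR
  have hbdd : BddAbove ((fun x => ‖R x‖) '' {x | ν x ≤ 1}) := by
    refine ⟨M, ?_⟩
    rintro - ⟨z, hz, rfl⟩
    calc ‖R z‖ ≤ M * ν z := hM z
    _ ≤ M * 1 := by exact mul_le_mul_of_nonneg_left hz hM0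
    _ = M := mul_one M
  by_cases hν : ν x = 0
  · have := hM x
    rw [hν] at this
    simpa [hν] using this
  · have ht : 0 < ν x := lt_of_le_of_ne (apply_nonneg ν x) (Ne.symm hν)
    set t : ℝ := ν x with htdef
    set y : X := ((t : ℂ))⁻¹ • x with hy
    have hνy : ν y = 1 := by
      rw [hy, map_smul_eq_mul, norm_inv, Complex.norm_real, Real.norm_eq_abs,
        abs_of_pos ht]
      field_simp
      exact htdef.symm
    have hmem : ‖R y‖ ∈ (fun x => ‖R x‖) '' {x | ν x ≤ 1} :=
      ⟨y, by simp [hνy], rfl⟩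
    have h1 : ‖R y‖ ≤ dualNorm ν R := le_csSup hbdd hmem
    have hRy : ‖R y‖ = t⁻¹ * ‖R x‖ := by
      rw [hy, map_smul, smul_eq_mul, norm_mul, norm_inv, Complex.norm_real,
        Real.norm_eq_abs, abs_of_pos ht]
    rw [hRy] at h1
    calc ‖R x‖ = t * (t⁻¹ * ‖R x‖) := by field_simp
    _ ≤ t * dualNorm ν R := mul_le_mul_of_nonneg_left h1 ht.le
    _ = dualNorm ν R * t := mul_comm _ _

/-- perturbing a p-frame `{Tᵢ}` (bounds `A, B`) by `{cᵢ·R}` with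
`∑ᵢ|cᵢ|^p < A/‖R‖^p` yields a p-frame; with `M = (∑ᵢ|cᵢ|^p)·‖R‖^p < A` its
bounds are `(1 − (M/A)^(1/p))^p·A` and `(M^(1/p) + B^(1/p))^p`. -/
theorem pframe_perturbation_by_functional {X : Type*} [AddCommGroup X]
    [Module ℂ X] (ν : Seminorm ℂ X) {I : Type*} [Countable I]
    (p : ℝ) (hp : 1 < p)
    (T : I → X →ₗ[ℂ] ℂ) (hTb : ∀ i, IsBddFunctional ν (T i))
    (A B : ℝ) (hA : 0 < A) (hB : 0 < B)
    (hT : ∀ x : X, Summable (fun i => ‖T i x‖ ^ p) ∧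
      A * ν x ^ p ≤ ∑' i, ‖T i x‖ ^ p ∧ ∑' i, ‖T i x‖ ^ p ≤ B * ν x ^ p)
    (R : X →ₗ[ℂ] ℂ) (hR : IsBddFunctional ν R) (hR0 : 0 < dualNorm ν R)
    (c : I → ℂ) (hc : Summable fun i => ‖c i‖ ^ p)
    (hcA : ∑' i, ‖c i‖ ^ p < A / dualNorm ν R ^ p) :
    ∀ x : X, Summable (fun i => ‖(T i + c i • R) x‖ ^ p) ∧
      (1 - (((∑' i, ‖c i‖ ^ p) * dualNorm ν R ^ p) / A) ^ (1 / p)) ^ p * A * ν x ^ p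
        ≤ ∑' i, ‖(T i + c i • R) x‖ ^ p ∧
      ∑' i, ‖(T i + c i • R) x‖ ^ p ≤
        (((∑' i, ‖c i‖ ^ p) * dualNorm ν R ^ p) ^ (1 / p) + B ^ (1 / p)) ^ p
          * ν x ^ p := by
  have hp0 : (0:ℝ) < p := lt_trans one_pos hp
  have hpne : p ≠ 0 := hp0.ne'
  have hp1 : (1:ℝ) ≤ p := hp.le
  set K := dualNorm ν R with hK
  set C := ∑' i, ‖c i‖ ^ p with hCdef
  have hC0 : 0 ≤ C := tsum_nonneg fun i => Real.rpow_nonneg (norm_nonneg _) _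
  have hKp : 0 < K ^ p := Real.rpow_pos_of_pos hR0 p
  set M := C * K ^ p with hMdef
  have hM0 : 0 ≤ M := mul_nonneg hC0 hKp.le
  have hMA : M < A := (lt_div_iff₀ hKp).mp hcA
  have hKx : ∀ x, ‖R x‖ ≤ K * ν x := dualNorm_bound ν R hR hR0.le
  intro x
  set t : ℝ := ν x with htdef
  have ht0 : 0 ≤ t := apply_nonneg ν x
  -- the two sequences
  have happly : ∀ i, ‖(T i + c i • R) x‖ = ‖T i x + c i * R x‖ := by
    intro i; simp [smul_eq_mul]
  obtain ⟨hS1sum, hS1lo, hS1hi⟩ := hT x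
  -- summability of g part
  have hbsum : Summable fun i => ‖c i * R x‖ ^ p := by
    have : (fun i => ‖c i * R x‖ ^ p) = fun i => ‖c i‖ ^ p * ‖R x‖ ^ p := by
      funext i
      rw [norm_mul, Real.mul_rpow (norm_nonneg _) (norm_nonneg _)]
    rw [this]
    exact hc.mul_right _
  have hS2eq : ∑' i, ‖c i * R x‖ ^ p = C * ‖R x‖ ^ p := by
    have : (fun i => ‖c i * R x‖ ^ p) = fun i => ‖c i‖ ^ p * ‖R x‖ ^ p := by
      funext i
      rw [norm_mul, Real.mul_rpow (norm_nonneg _) (norm_nonneg _)]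
    rw [this, tsum_mul_right]
  have hS2le : ∑' i, ‖c i * R x‖ ^ p ≤ M * t ^ p := by
    rw [hS2eq]
    calc C * ‖R x‖ ^ p ≤ C * (K * t) ^ p := by
          exact mul_le_mul_of_nonneg_left
            (Real.rpow_le_rpow (norm_nonneg _) (hKx x) hp0.le) hC0
    _ = M * t ^ p := by
          rw [Real.mul_rpow hR0.le ht0, hMdef]; ring
  have hS2nn : 0 ≤ ∑' i, ‖c i * R x‖ ^ p :=
    tsum_nonneg fun i => Real.rpow_nonneg (norm_nonneg _) _
  -- Minkowski for the sum
  obtain ⟨hmsum, hmle⟩ := Real.Lp_add_le_tsum_of_nonneg hp1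
    (fun i => norm_nonneg (T i x)) (fun i => norm_nonneg (c i * R x)) hS1sum hbsum
  have hterm : ∀ i, ‖T i x + c i * R x‖ ^ p ≤ (‖T i x‖ + ‖c i * R x‖) ^ p :=
    fun i => Real.rpow_le_rpow (norm_nonneg _) (norm_add_le _ _) hp0.le
  have hSsum : Summable fun i => ‖T i x + c i * R x‖ ^ p :=
    Summable.of_nonneg_of_le (fun i => Real.rpow_nonneg (norm_nonneg _) _) hterm hmsum
  have hSsum' : Summable fun i => ‖(T i + c i • R) x‖ ^ p := by
    simpa only [happly] using hSsum
  have hSrw : ∑' i, ‖(T i + c i • R) x‖ ^ p = ∑' i, ‖T i x + c i * R x‖ ^ p := by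
    exact tsum_congr fun i => by rw [happly]
  set S := ∑' i, ‖T i x + c i * R x‖ ^ p with hSdef
  have hSnn : 0 ≤ S := tsum_nonneg fun i => Real.rpow_nonneg (norm_nonneg _) _
  -- upper bound
  have hupper : S ^ (1/p) ≤ (B ^ (1/p)) * t + (M ^ (1/p)) * t := by
    have h1 : S ≤ ∑' i, (‖T i x‖ + ‖c i * R x‖) ^ p := Summable.tsum_le_tsum hterm hSsum hmsum
    have h2 : S ^ (1/p) ≤ (∑' i, (‖T i x‖ + ‖c i * R x‖) ^ p) ^ (1/p) :=
      Real.rpow_le_rpow hSnn h1 (by positivity)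
    have h3 : (∑' i, ‖T i x‖ ^ p) ^ (1/p) ≤ (B ^ (1/p)) * t := by
      calc (∑' i, ‖T i x‖ ^ p) ^ (1/p) ≤ (B * t ^ p) ^ (1/p) :=
            Real.rpow_le_rpow (tsum_nonneg fun i => Real.rpow_nonneg (norm_nonneg _) _)
              hS1hi (by positivity)
      _ = (B ^ (1/p)) * t := by
            rw [Real.mul_rpow hB.le (Real.rpow_nonneg ht0 _), one_div,
              Real.rpow_rpow_inv ht0 hpne]
    have h4 : (∑' i, ‖c i * R x‖ ^ p) ^ (1/p) ≤ (M ^ (1/p)) * t := by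
      calc (∑' i, ‖c i * R x‖ ^ p) ^ (1/p) ≤ (M * t ^ p) ^ (1/p) :=
            Real.rpow_le_rpow hS2nn hS2le (by positivity)
      _ = (M ^ (1/p)) * t := by
            rw [Real.mul_rpow hM0 (Real.rpow_nonneg ht0 _), one_div,
              Real.rpow_rpow_inv ht0 hpne]
    calc S ^ (1/p) ≤ (∑' i, ‖T i x‖ ^ p) ^ (1/p) + (∑' i, ‖c i * R x‖ ^ p) ^ (1/p) :=
          h2.trans hmle
    _ ≤ (B ^ (1/p)) * t + (M ^ (1/p)) * t := add_le_add h3 h4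
  -- lower bound
  have hlower : (A ^ (1/p)) * t - (M ^ (1/p)) * t ≤ S ^ (1/p) := by
    obtain ⟨hmsum2, hmle2⟩ := Real.Lp_add_le_tsum_of_nonneg hp1
      (fun i => norm_nonneg (T i x + c i * R x)) (fun i => norm_nonneg (c i * R x))
      hSsum hbsum
    have hterm2 : ∀ i, ‖T i x‖ ^ p ≤ (‖T i x + c i * R x‖ + ‖c i * R x‖) ^ p := by
      intro i
      refine Real.rpow_le_rpow (norm_nonneg _) ?_ hp0.le
      calc ‖T i x‖ = ‖(T i x + c i * R x) + (-(c i * R x))‖ := by ring_nf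
      _ ≤ ‖T i x + c i * R x‖ + ‖-(c i * R x)‖ := norm_add_le _ _
      _ = ‖T i x + c i * R x‖ + ‖c i * R x‖ := by rw [norm_neg]
    have h1 : ∑' i, ‖T i x‖ ^ p ≤ ∑' i, (‖T i x + c i * R x‖ + ‖c i * R x‖) ^ p :=
      Summable.tsum_le_tsum hterm2 hS1sum hmsum2
    have h2 : (∑' i, ‖T i x‖ ^ p) ^ (1/p) ≤ S ^ (1/p) + (∑' i, ‖c i * R x‖ ^ p) ^ (1/p) :=
      (Real.rpow_le_rpow (tsum_nonneg fun i => Real.rpow_nonneg (norm_nonneg _) _)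
        h1 (by positivity)).trans hmle2
    have h3 : (A ^ (1/p)) * t ≤ (∑' i, ‖T i x‖ ^ p) ^ (1/p) := by
      calc (A ^ (1/p)) * t = (A * t ^ p) ^ (1/p) := by
            rw [Real.mul_rpow hA.le (Real.rpow_nonneg ht0 _), one_div,
              Real.rpow_rpow_inv ht0 hpne]
      _ ≤ (∑' i, ‖T i x‖ ^ p) ^ (1/p) :=
            Real.rpow_le_rpow (by positivity) hS1lo (by positivity)
    have h4 : (∑' i, ‖c i * R x‖ ^ p) ^ (1/p) ≤ (M ^ (1/p)) * t := by
      calc (∑' i, ‖c i * R x‖ ^ p) ^ (1/p) ≤ (M * t ^ p) ^ (1/p) :=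
            Real.rpow_le_rpow hS2nn hS2le (by positivity)
      _ = (M ^ (1/p)) * t := by
            rw [Real.mul_rpow hM0 (Real.rpow_nonneg ht0 _), one_div,
              Real.rpow_rpow_inv ht0 hpne]
    linarith [h3.trans h2]
  refine ⟨hSsum', ?_, ?_⟩
  · rw [hSrw]
    -- rewrite target lower constant
    have hMApow : (M / A) ^ (1/p) = M ^ (1/p) / A ^ (1/p) :=
      Real.div_rpow hM0 hA.le _
    have hApow : (A ^ (1/p)) ^ p = A := by
      rw [one_div, Real.rpow_inv_rpow hA.le hpne]
    have hd0 : 0 ≤ A ^ (1/p) - M ^ (1/p) := by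
      have : M ^ (1/p) ≤ A ^ (1/p) :=
        Real.rpow_le_rpow hM0 hMA.le (by positivity)
      linarith
    have hAp0 : 0 < A ^ (1/p) := Real.rpow_pos_of_pos hA _
    have hconst : (1 - (M / A) ^ (1/p)) ^ p * A = (A ^ (1/p) - M ^ (1/p)) ^ p := by
      rw [hMApow]
      rw [show (1 - M ^ (1/p) / A ^ (1/p)) = (A ^ (1/p) - M ^ (1/p)) / A ^ (1/p) by
        field_simp]
      rw [Real.div_rpow hd0 hAp0.le, hApow]
      exact div_mul_cancel₀ _ hA.ne'
    rw [hconst, mul_comm ((A ^ (1/p) - M ^ (1/p)) ^ p) (t ^ p) ]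
    calc t ^ p * (A ^ (1/p) - M ^ (1/p)) ^ p
        = ((A ^ (1/p) - M ^ (1/p)) * t) ^ p := by
          rw [Real.mul_rpow hd0 ht0]; ring
    _ ≤ (S ^ (1/p)) ^ p := by
          refine Real.rpow_le_rpow (by nlinarith) ?_ hp0.le
          calc (A ^ (1/p) - M ^ (1/p)) * t = (A ^ (1/p)) * t - (M ^ (1/p)) * t := by ring
          _ ≤ S ^ (1/p) := hlower
    _ = S := by rw [one_div, Real.rpow_inv_rpow hSnn hpne]
  · rw [hSrw]
    have : S = (S ^ (1/p)) ^ p := by rw [one_div, Real.rpow_inv_rpow hSnn hpne]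
    rw [this]
    calc (S ^ (1/p)) ^ p ≤ ((M ^ (1/p) + B ^ (1/p)) * t) ^ p := by
          refine Real.rpow_le_rpow (Real.rpow_nonneg hSnn _) ?_ hp0.le
          calc S ^ (1/p) ≤ (B ^ (1/p)) * t + (M ^ (1/p)) * t := hupper
          _ = (M ^ (1/p) + B ^ (1/p)) * t := by ring
    _ = (M ^ (1/p) + B ^ (1/p)) ^ p * t ^ p := by
          rw [Real.mul_rpow (by positivity) ht0]
end

section
/- Let {Tᵢ}_{i∈I} be a p-frame for X with bounds A, B and let {Rᵢ}_{i∈I} be bounded linear functionals on X such that Σᵢ |Rᵢ(x)|^p converges for every x ∈ X. Let {αᵢ}, {βᵢ} be positively confined sequences of reals, with M₁ = inf αᵢ, N = sup αᵢ, M = inf βᵢ, N₁ = sup βᵢ. Suppose there exist constants λ, μ with 0 ≤ λ, μ < 1/2^p such that for all x ∈ X: Σᵢ |αᵢ·Tᵢ(x) − βᵢ·Rᵢ(x)|^p ≤ λ·Σᵢ |αᵢ·Tᵢ(x)|^p + μ·Σᵢ |βᵢ·Rᵢ(x)|^p. Then {Rᵢ}_{i∈I} is a p-frame for X; explicitly,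 for all x ∈ X: ((1 − 2^p·λ)·M₁^p)/(2^p·(1 + μ)·N₁^p)·A·‖x‖^p ≤ Σᵢ |Rᵢ(x)|^p ≤ (2^p·(1 + λ)·N^p)/((1 − 2^p·μ)·M^p)·B·‖x‖^p. -/
private lemma rpow_add_le_aux (p a b : ℝ) (hp : 0 ≤ p) (ha : 0 ≤ a) (hb : 0 ≤ b) :
    (a + b) ^ p ≤ 2 ^ p * (a ^ p + b ^ p) := by
  have hmax : a + b ≤ 2 * max a b := by
    rcases le_total a b with h | h
    · rw [max_eq_right h]; linarith
    · rw [max_eq_left h]; linarith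
  have h1 : (a + b) ^ p ≤ (2 * max a b) ^ p :=
    Real.rpow_le_rpow (by positivity) hmax hp
  have h2 : (2 * max a b) ^ p = 2 ^ p * (max a b) ^ p :=
    Real.mul_rpow (by norm_num) (le_max_iff.mpr (Or.inl ha))
  have h3 : (max a b) ^ p ≤ a ^ p + b ^ p := by
    rcases le_total a b with h | h
    · rw [max_eq_right h]; linarith [Real.rpow_nonneg ha p]
    · rw [max_eq_left h]; linarith [Real.rpow_nonneg hb p]
  have h2p : (0:ℝ) ≤ 2 ^ p := Real.rpow_nonneg (by norm_num) p
  calc (a + b) ^ p ≤ 2 ^ p * (max a b) ^ p := by rw [← h2]; exact h1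
  _ ≤ 2 ^ p * (a ^ p + b ^ p) := by nlinarith

set_option maxHeartbeats 1000000 in
/-- perturbation of a p-frame by positively confined weight
sequences. If `∑ᵢ|αᵢTᵢ(x) − βᵢRᵢ(x)|^p ≤ λ∑ᵢ|αᵢTᵢ(x)|^p + μ∑ᵢ|βᵢRᵢ(x)|^p`
with `0 ≤ λ, μ < 1/2^p`, then `{Rᵢ}` is a p-frame with the explicit bounds
`((1 − 2^p λ) M₁^p)/(2^p (1+μ) N₁^p) · A` and `(2^p (1+λ) N^p)/((1 − 2^p μ) M^p) · B`,
where `M₁ = inf αᵢ`, `N = sup αᵢ`, `M = inf βᵢ`, `N₁ = sup βᵢ`. -/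
theorem pframe_weighted_perturbation {X : Type*} [AddCommGroup X] [Module ℂ X]
    (ν : Seminorm ℂ X) {I : Type*} [Countable I] [Nonempty I]
    (p : ℝ) (hp : 1 < p)
    (T R : I → X →ₗ[ℂ] ℂ)
    (hTb : ∀ i, ∃ M : ℝ, 0 ≤ M ∧ ∀ x : X, ‖T i x‖ ≤ M * ν x)
    (hRb : ∀ i, ∃ M : ℝ, 0 ≤ M ∧ ∀ x : X, ‖R i x‖ ≤ M * ν x)
    (A B : ℝ) (hA : 0 < A) (hB : 0 < B)
    (hT : ∀ x : X, Summable (fun i => ‖T i x‖ ^ p) ∧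
      A * ν x ^ p ≤ ∑' i, ‖T i x‖ ^ p ∧ ∑' i, ‖T i x‖ ^ p ≤ B * ν x ^ p)
    (hRsum : ∀ x : X, Summable fun i => ‖R i x‖ ^ p)
    (α β : I → ℝ)
    (hαbdd : BddAbove (Set.range α)) (hβbdd : BddAbove (Set.range β))
    (hα0 : 0 < ⨅ i, α i) (hβ0 : 0 < ⨅ i, β i)
    (lam mu : ℝ) (hlam : 0 ≤ lam) (hmu : 0 ≤ mu)
    (hlam' : lam < 1 / 2 ^ p) (hmu' : mu < 1 / 2 ^ p)
    (hpert : ∀ x : X,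
      ∑' i, ‖α i • T i x - β i • R i x‖ ^ p ≤
        lam * ∑' i, ‖α i • T i x‖ ^ p + mu * ∑' i, ‖β i • R i x‖ ^ p) :
    ∀ x : X,
      ((1 - 2 ^ p * lam) * (⨅ i, α i) ^ p) / (2 ^ p * (1 + mu) * (⨆ i, β i) ^ p)
          * A * ν x ^ p ≤ ∑' i, ‖R i x‖ ^ p ∧
      ∑' i, ‖R i x‖ ^ p ≤
        (2 ^ p * (1 + lam) * (⨆ i, α i) ^ p) / ((1 - 2 ^ p * mu) * (⨅ i, β i) ^ p)
          * B * ν x ^ p := by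
  obtain ⟨i0⟩ := ‹Nonempty I›
  have hp0 : (0:ℝ) ≤ p := by linarith
  have h2p : (0:ℝ) < 2 ^ p := Real.rpow_pos_of_pos two_pos p
  have hαbb : BddBelow (Set.range α) := by
    by_contra h
    rw [Real.iInf_of_not_bddBelow h] at hα0
    exact lt_irrefl _ hα0
  have hβbb : BddBelow (Set.range β) := by
    by_contra h
    rw [Real.iInf_of_not_bddBelow h] at hβ0
    exact lt_irrefl _ hβ0
  have hαi : ∀ i, (⨅ j, α j) ≤ α i := fun i => ciInf_le hαbb i
  have hαs : ∀ i, α i ≤ ⨆ j, α j := fun i => le_ciSup hαbdd i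
  have hβi : ∀ i, (⨅ j, β j) ≤ β i := fun i => ciInf_le hβbb i
  have hβs : ∀ i, β i ≤ ⨆ j, β j := fun i => le_ciSup hβbdd i
  have hαpos : ∀ i, 0 < α i := fun i => lt_of_lt_of_le hα0 (hαi i)
  have hβpos : ∀ i, 0 < β i := fun i => lt_of_lt_of_le hβ0 (hβi i)
  have hNα : 0 < ⨆ j, α j := lt_of_lt_of_le (hαpos i0) (hαs i0)
  have hNβ : 0 < ⨆ j, β j := lt_of_lt_of_le (hβpos i0) (hβs i0)
  -- positivity of frame constants
  have h1mu : 0 < 1 - 2 ^ p * mu := by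
    have := (lt_div_iff₀ h2p).mp hmu'
    nlinarith
  have h1lam : 0 < 1 - 2 ^ p * lam := by
    have := (lt_div_iff₀ h2p).mp hlam'
    nlinarith
  intro x
  obtain ⟨hTsum, hTlo, hThi⟩ := hT x
  have hRsx := hRsum x
  -- norms of scaled terms
  have hgα : ∀ i, ‖α i • T i x‖ ^ p = α i ^ p * ‖T i x‖ ^ p := by
    intro i
    rw [norm_smul, Real.norm_eq_abs, abs_of_pos (hαpos i),
      Real.mul_rpow (hαpos i).le (norm_nonneg _)]
  have hgβ : ∀ i, ‖β i • R i x‖ ^ p = β i ^ p * ‖R i x‖ ^ p := by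
    intro i
    rw [norm_smul, Real.norm_eq_abs, abs_of_pos (hβpos i),
      Real.mul_rpow (hβpos i).le (norm_nonneg _)]
  -- summability
  have hSα : Summable (fun i => ‖α i • T i x‖ ^ p) := by
    have hcomp : ∀ i, ‖α i • T i x‖ ^ p ≤ (⨆ j, α j) ^ p * ‖T i x‖ ^ p := by
      intro i
      rw [hgα]
      exact mul_le_mul_of_nonneg_right
        (Real.rpow_le_rpow (hαpos i).le (hαs i) hp0) (Real.rpow_nonneg (norm_nonneg _) p)
    exact Summable.of_nonneg_of_le (fun i => Real.rpow_nonneg (norm_nonneg _) p) hcomp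
      (hTsum.mul_left ((⨆ j, α j) ^ p))
  have hSβ : Summable (fun i => ‖β i • R i x‖ ^ p) := by
    have hcomp : ∀ i, ‖β i • R i x‖ ^ p ≤ (⨆ j, β j) ^ p * ‖R i x‖ ^ p := by
      intro i
      rw [hgβ]
      exact mul_le_mul_of_nonneg_right
        (Real.rpow_le_rpow (hβpos i).le (hβs i) hp0) (Real.rpow_nonneg (norm_nonneg _) p)
    exact Summable.of_nonneg_of_le (fun i => Real.rpow_nonneg (norm_nonneg _) p) hcomp
      (hRsx.mul_left ((⨆ j, β j) ^ p))
  have hdle : ∀ i, ‖α i • T i x - β i • R i x‖ ^ p ≤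
      2 ^ p * (‖α i • T i x‖ ^ p + ‖β i • R i x‖ ^ p) := by
    intro i
    calc ‖α i • T i x - β i • R i x‖ ^ p
        ≤ (‖α i • T i x‖ + ‖β i • R i x‖) ^ p :=
          Real.rpow_le_rpow (norm_nonneg _) (norm_sub_le _ _) hp0
      _ ≤ _ := rpow_add_le_aux p _ _ hp0 (norm_nonneg _) (norm_nonneg _)
  have hSd : Summable (fun i => ‖α i • T i x - β i • R i x‖ ^ p) :=
    Summable.of_nonneg_of_le (fun i => Real.rpow_nonneg (norm_nonneg _) p) hdle ((hSα.add hSβ).mul_left _)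
  -- abbreviations
  set Sa := ∑' i, ‖α i • T i x‖ ^ p with hSadef
  set Sb := ∑' i, ‖β i • R i x‖ ^ p with hSbdef
  set D := ∑' i, ‖α i • T i x - β i • R i x‖ ^ p with hDdef
  have hDle : D ≤ lam * Sa + mu * Sb := hpert x
  -- termwise triangle bounds
  have hβle : ∀ i, ‖β i • R i x‖ ^ p ≤
      2 ^ p * (‖α i • T i x‖ ^ p + ‖α i • T i x - β i • R i x‖ ^ p) := by
    intro i
    have hb : ‖β i • R i x‖ ≤ ‖α i • T i x‖ + ‖α i • T i x - β i • R i x‖ := by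
      have := norm_sub_le (α i • T i x) (α i • T i x - β i • R i x)
      simpa using this
    calc ‖β i • R i x‖ ^ p
        ≤ (‖α i • T i x‖ + ‖α i • T i x - β i • R i x‖) ^ p :=
          Real.rpow_le_rpow (norm_nonneg _) hb hp0
      _ ≤ _ := rpow_add_le_aux p _ _ hp0 (norm_nonneg _) (norm_nonneg _)
  have hαle : ∀ i, ‖α i • T i x‖ ^ p ≤
      2 ^ p * (‖β i • R i x‖ ^ p + ‖α i • T i x - β i • R i x‖ ^ p) := by
    intro i
    have hb : ‖α i • T i x‖ ≤ ‖β i • R i x‖ + ‖α i • T i x - β i • R i x‖ := by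
      have := norm_add_le (β i • R i x) (α i • T i x - β i • R i x)
      simpa [add_comm] using this
    calc ‖α i • T i x‖ ^ p
        ≤ (‖β i • R i x‖ + ‖α i • T i x - β i • R i x‖) ^ p :=
          Real.rpow_le_rpow (norm_nonneg _) hb hp0
      _ ≤ _ := rpow_add_le_aux p _ _ hp0 (norm_nonneg _) (norm_nonneg _)
  -- summed triangle bounds
  have hSb2 : Sb ≤ 2 ^ p * (Sa + D) := by
    have h := Summable.tsum_le_tsum hβle hSβ ((hSα.add hSd).mul_left (2 ^ p))
    rwa [tsum_mul_left, Summable.tsum_add hSα hSd] at h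
  have hSa2 : Sa ≤ 2 ^ p * (Sb + D) := by
    have h := Summable.tsum_le_tsum hαle hSα ((hSβ.add hSd).mul_left (2 ^ p))
    rwa [tsum_mul_left, Summable.tsum_add hSβ hSd] at h
  -- comparisons with unweighted sums
  have hSbQ1 : (⨅ j, β j) ^ p * (∑' i, ‖R i x‖ ^ p) ≤ Sb := by
    rw [← tsum_mul_left]
    apply Summable.tsum_le_tsum (fun i => ?_) (hRsx.mul_left _) hSβ
    rw [hgβ]
    exact mul_le_mul_of_nonneg_right
      (Real.rpow_le_rpow hβ0.le (hβi i) hp0) (Real.rpow_nonneg (norm_nonneg _) p)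
  have hSbQ2 : Sb ≤ (⨆ j, β j) ^ p * (∑' i, ‖R i x‖ ^ p) := by
    rw [← tsum_mul_left]
    apply Summable.tsum_le_tsum (fun i => ?_) hSβ (hRsx.mul_left _)
    rw [hgβ]
    exact mul_le_mul_of_nonneg_right
      (Real.rpow_le_rpow (hβpos i).le (hβs i) hp0) (Real.rpow_nonneg (norm_nonneg _) p)
  have hSaS1 : (⨅ j, α j) ^ p * (∑' i, ‖T i x‖ ^ p) ≤ Sa := by
    rw [← tsum_mul_left]
    apply Summable.tsum_le_tsum (fun i => ?_) (hTsum.mul_left _) hSα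
    rw [hgα]
    exact mul_le_mul_of_nonneg_right
      (Real.rpow_le_rpow hα0.le (hαi i) hp0) (Real.rpow_nonneg (norm_nonneg _) p)
  have hSaS2 : Sa ≤ (⨆ j, α j) ^ p * (∑' i, ‖T i x‖ ^ p) := by
    rw [← tsum_mul_left]
    apply Summable.tsum_le_tsum (fun i => ?_) hSα (hTsum.mul_left _)
    rw [hgα]
    exact mul_le_mul_of_nonneg_right
      (Real.rpow_le_rpow (hαpos i).le (hαs i) hp0) (Real.rpow_nonneg (norm_nonneg _) p)
  have hMαp : 0 < (⨅ j, α j) ^ p := Real.rpow_pos_of_pos hα0 p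
  have hMβp : 0 < (⨅ j, β j) ^ p := Real.rpow_pos_of_pos hβ0 p
  have hNαp : 0 < (⨆ j, α j) ^ p := Real.rpow_pos_of_pos hNα p
  have hNβp : 0 < (⨆ j, β j) ^ p := Real.rpow_pos_of_pos hNβ p
  -- key linear consequences
  have step1 : (1 - 2 ^ p * mu) * Sb ≤ 2 ^ p * (1 + lam) * Sa := by
    have h1 : 2 ^ p * D ≤ 2 ^ p * (lam * Sa + mu * Sb) :=
      mul_le_mul_of_nonneg_left hDle h2p.le
    nlinarith [hSb2]
  have step1' : (1 - 2 ^ p * lam) * Sa ≤ 2 ^ p * (1 + mu) * Sb := by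
    have h1 : 2 ^ p * D ≤ 2 ^ p * (lam * Sa + mu * Sb) :=
      mul_le_mul_of_nonneg_left hDle h2p.le
    nlinarith [hSa2]
  constructor
  · -- lower bound
    have step2 : (⨅ j, α j) ^ p * (A * ν x ^ p) ≤ Sa :=
      le_trans (mul_le_mul_of_nonneg_left hTlo hMαp.le) hSaS1
    have lower : ((1 - 2 ^ p * lam) * (⨅ j, α j) ^ p) * (A * ν x ^ p) ≤
        (2 ^ p * (1 + mu) * (⨆ j, β j) ^ p) * (∑' i, ‖R i x‖ ^ p) := by
      calc ((1 - 2 ^ p * lam) * (⨅ j, α j) ^ p) * (A * ν x ^ p)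
          = (1 - 2 ^ p * lam) * ((⨅ j, α j) ^ p * (A * ν x ^ p)) := by ring
        _ ≤ (1 - 2 ^ p * lam) * Sa := mul_le_mul_of_nonneg_left step2 h1lam.le
        _ ≤ 2 ^ p * (1 + mu) * Sb := step1'
        _ ≤ 2 ^ p * (1 + mu) * ((⨆ j, β j) ^ p * (∑' i, ‖R i x‖ ^ p)) := by
            apply mul_le_mul_of_nonneg_left hSbQ2
            positivity
        _ = (2 ^ p * (1 + mu) * (⨆ j, β j) ^ p) * (∑' i, ‖R i x‖ ^ p) := by ring
    have hc2 : 0 < 2 ^ p * (1 + mu) * (⨆ j, β j) ^ p := by positivity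
    rw [div_mul_eq_mul_div, div_mul_eq_mul_div, div_le_iff₀ hc2]
    nlinarith [lower]
  · -- upper bound
    have step2 : Sa ≤ (⨆ j, α j) ^ p * (B * ν x ^ p) :=
      le_trans hSaS2 (mul_le_mul_of_nonneg_left hThi hNαp.le)
    have upper : ((1 - 2 ^ p * mu) * (⨅ j, β j) ^ p) * (∑' i, ‖R i x‖ ^ p) ≤
        (2 ^ p * (1 + lam) * (⨆ j, α j) ^ p) * (B * ν x ^ p) := by
      calc ((1 - 2 ^ p * mu) * (⨅ j, β j) ^ p) * (∑' i, ‖R i x‖ ^ p)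
          = (1 - 2 ^ p * mu) * ((⨅ j, β j) ^ p * (∑' i, ‖R i x‖ ^ p)) := by ring
        _ ≤ (1 - 2 ^ p * mu) * Sb := mul_le_mul_of_nonneg_left hSbQ1 h1mu.le
        _ ≤ 2 ^ p * (1 + lam) * Sa := step1
        _ ≤ 2 ^ p * (1 + lam) * ((⨆ j, α j) ^ p * (B * ν x ^ p)) := by
            apply mul_le_mul_of_nonneg_left step2
            positivity
        _ = (2 ^ p * (1 + lam) * (⨆ j, α j) ^ p) * (B * ν x ^ p) := by ring
    have hc3 : 0 < (1 - 2 ^ p * mu) * (⨅ j, β j) ^ p := by positivity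
    rw [div_mul_eq_mul_div, div_mul_eq_mul_div, le_div_iff₀ hc3]
    nlinarith [upper]
end

section
/- Let {Tᵢ}_{i∈I} be a p-frame for X with bounds A, B and let {Rᵢ}_{i∈I} be bounded linear functionals on X such that Σᵢ |(Tᵢ − Rᵢ)(x)|^p converges for every x ∈ X. Suppose there exist constants α, β ≥ 0 with α + β/A < 1 such that for all x ∈ X: Σᵢ |Tᵢ(x) − Rᵢ(x)|^p ≤ α·Σᵢ |Tᵢ(x)|^p + β·‖x‖^p. Then {Rᵢ}_{i∈I} is a p-frame for X with bounds (1 − (α + β/A)^{1/p})^p·A and ((α·B + β)^{1/p} + B^{1/p})^p. -/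
open Real

private lemma rpow_one_div_rpow {x p : ℝ} (hx : 0 ≤ x) (hp : p ≠ 0) :
    (x ^ (1 / p)) ^ p = x := by
  rw [← Real.rpow_mul hx, one_div_mul_cancel hp, Real.rpow_one]

/-- stability of p-frames. If `{Tᵢ}` is a p-frame with bounds
`A, B` and `∑ᵢ|Tᵢ(x) − Rᵢ(x)|^p ≤ α∑ᵢ|Tᵢ(x)|^p + β·ν x^p` with
`α, β ≥ 0`, `α + β/A < 1`, then `{Rᵢ}` is a p-frame with bounds
`(1 − (α + β/A)^(1/p))^p·A` and `((αB + β)^(1/p) + B^(1/p))^p`. -/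
theorem pframe_stability {X : Type*} [AddCommGroup X] [Module ℂ X]
    (ν : Seminorm ℂ X) {I : Type*} [Countable I]
    (p : ℝ) (hp : 1 < p)
    (T R : I → X →ₗ[ℂ] ℂ)
    (hTb : ∀ i, ∃ M : ℝ, 0 ≤ M ∧ ∀ x : X, ‖T i x‖ ≤ M * ν x)
    (hRb : ∀ i, ∃ M : ℝ, 0 ≤ M ∧ ∀ x : X, ‖R i x‖ ≤ M * ν x)
    (A B : ℝ) (hA : 0 < A) (hB : 0 < B)
    (hT : ∀ x : X, Summable (fun i => ‖T i x‖ ^ p) ∧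
      A * ν x ^ p ≤ ∑' i, ‖T i x‖ ^ p ∧ ∑' i, ‖T i x‖ ^ p ≤ B * ν x ^ p)
    (hdiff : ∀ x : X, Summable fun i => ‖T i x - R i x‖ ^ p)
    (α β : ℝ) (hα : 0 ≤ α) (hβ : 0 ≤ β) (hαβ : α + β / A < 1)
    (hpert : ∀ x : X, ∑' i, ‖T i x - R i x‖ ^ p ≤
      α * ∑' i, ‖T i x‖ ^ p + β * ν x ^ p) :
    ∀ x : X, Summable (fun i => ‖R i x‖ ^ p) ∧
      (1 - (α + β / A) ^ (1 / p)) ^ p * A * ν x ^ p ≤ ∑' i, ‖R i x‖ ^ p ∧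
      ∑' i, ‖R i x‖ ^ p ≤ ((α * B + β) ^ (1 / p) + B ^ (1 / p)) ^ p * ν x ^ p := by
  intro x
  have hp0 : (0:ℝ) < p := lt_trans one_pos hp
  have hp0' : p ≠ 0 := ne_of_gt hp0
  have hp1 : (1:ℝ) ≤ p := le_of_lt hp
  have hip : (0:ℝ) ≤ 1 / p := by positivity
  obtain ⟨hTs, hTlow, hTup⟩ := hT x
  have hds := hdiff x
  have hp' := hpert x
  set N : ℝ := ν x ^ p with hN
  have hN0 : 0 ≤ N := Real.rpow_nonneg (apply_nonneg ν x) p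
  set s : ℝ := ∑' i, ‖T i x‖ ^ p with hs
  set d : ℝ := ∑' i, ‖T i x - R i x‖ ^ p with hd
  have hs0 : 0 ≤ s := tsum_nonneg fun i => Real.rpow_nonneg (norm_nonneg _) p
  have hd0 : 0 ≤ d := tsum_nonneg fun i => Real.rpow_nonneg (norm_nonneg _) p
  -- summability of R and upper Minkowski
  have hfnn : ∀ i, (0:ℝ) ≤ ‖T i x‖ := fun i => norm_nonneg _
  have hgnn : ∀ i, (0:ℝ) ≤ ‖T i x - R i x‖ := fun i => norm_nonneg _
  obtain ⟨hsumTd, hmink⟩ :=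
    Real.Lp_add_le_tsum_of_nonneg hp1 hfnn hgnn hTs hds
  have hRle : ∀ i, ‖R i x‖ ≤ ‖T i x‖ + ‖T i x - R i x‖ := by
    intro i
    calc ‖R i x‖ = ‖T i x - (T i x - R i x)‖ := by ring_nf
      _ ≤ ‖T i x‖ + ‖T i x - R i x‖ := norm_sub_le _ _
  have hRs : Summable fun i => ‖R i x‖ ^ p := by
    refine Summable.of_nonneg_of_le (fun i => Real.rpow_nonneg (norm_nonneg _) p)
      (fun i => Real.rpow_le_rpow (norm_nonneg _) (hRle i) (le_of_lt hp0)) hsumTd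
  set r : ℝ := ∑' i, ‖R i x‖ ^ p with hr
  have hr0 : 0 ≤ r := tsum_nonneg fun i => Real.rpow_nonneg (norm_nonneg _) p
  refine ⟨hRs, ?_, ?_⟩
  · -- lower bound
    -- Minkowski applied to T = R + (T - R)
    obtain ⟨hsumRd, hmink2⟩ :=
      Real.Lp_add_le_tsum_of_nonneg hp1 (fun i => norm_nonneg (R i x)) hgnn hRs hds
    have hT_le : s ^ (1/p) ≤ r ^ (1/p) + d ^ (1/p) := by
      refine le_trans ?_ hmink2
      refine Real.rpow_le_rpow hs0 ?_ hip
      refine Summable.tsum_le_tsum (fun i => ?_) hTs hsumRd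
      refine Real.rpow_le_rpow (norm_nonneg _) ?_ (le_of_lt hp0)
      calc ‖T i x‖ = ‖R i x + (T i x - R i x)‖ := by ring_nf
        _ ≤ ‖R i x‖ + ‖T i x - R i x‖ := norm_add_le _ _
    -- d ≤ (α + β/A) s
    have hdle : d ≤ (α + β / A) * s := by
      have hNs : β * N ≤ (β / A) * s := by
        have h1 : A * N ≤ s := hTlow
        have : β * (A * N) ≤ β * s := mul_le_mul_of_nonneg_left h1 hβ
        calc β * N = (β / A) * (A * N) := by field_simp
          _ ≤ (β / A) * s := mul_le_mul_of_nonneg_left h1 (by positivity)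
      calc d ≤ α * s + β * N := hp'
        _ ≤ α * s + (β / A) * s := by linarith
        _ = (α + β / A) * s := by ring
    have hαβ0 : (0:ℝ) ≤ α + β / A := by positivity
    have hc1 : (α + β / A) ^ (1/p) < 1 := by
      calc (α + β / A) ^ (1/p) < 1 ^ (1/p) := by
            apply Real.rpow_lt_rpow hαβ0 hαβ (by positivity)
        _ = 1 := Real.one_rpow _
    have hdp : d ^ (1/p) ≤ (α + β / A) ^ (1/p) * s ^ (1/p) := by
      rw [← Real.mul_rpow hαβ0 hs0]
      exact Real.rpow_le_rpow hd0 hdle hip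
    set c : ℝ := (α + β / A) ^ (1/p) with hc
    have hc0 : 0 ≤ c := Real.rpow_nonneg hαβ0 _
    have key : (1 - c) * s ^ (1/p) ≤ r ^ (1/p) := by nlinarith [Real.rpow_nonneg hs0 (1/p)]
    have h1c : 0 ≤ 1 - c := by linarith
    have key2 : ((1 - c) * s ^ (1/p)) ^ p ≤ (r ^ (1/p)) ^ p :=
      Real.rpow_le_rpow (by positivity) key (le_of_lt hp0)
    rw [Real.mul_rpow h1c (Real.rpow_nonneg hs0 _), rpow_one_div_rpow hs0 hp0',
      rpow_one_div_rpow hr0 hp0'] at key2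
    calc (1 - c) ^ p * A * N ≤ (1 - c) ^ p * s := by
          rw [mul_assoc]
          exact mul_le_mul_of_nonneg_left hTlow (Real.rpow_nonneg h1c p)
      _ ≤ r := key2
  · -- upper bound
    have hrle : r ^ (1/p) ≤ s ^ (1/p) + d ^ (1/p) := by
      refine le_trans ?_ hmink
      refine Real.rpow_le_rpow hr0 ?_ hip
      exact Summable.tsum_le_tsum (fun i => Real.rpow_le_rpow (norm_nonneg _) (hRle i) (le_of_lt hp0))
        hRs hsumTd
    have hsB : s ≤ B * N := hTup
    have hdB : d ≤ (α * B + β) * N := by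
      calc d ≤ α * s + β * N := hp'
        _ ≤ α * (B * N) + β * N := by nlinarith
        _ = (α * B + β) * N := by ring
    have hsp : s ^ (1/p) ≤ B ^ (1/p) * N ^ (1/p) := by
      rw [← Real.mul_rpow (le_of_lt hB) hN0]
      exact Real.rpow_le_rpow hs0 hsB hip
    have hdp : d ^ (1/p) ≤ (α * B + β) ^ (1/p) * N ^ (1/p) := by
      rw [← Real.mul_rpow (by positivity) hN0]
      exact Real.rpow_le_rpow hd0 hdB hip
    have hfin : r ^ (1/p) ≤ ((α * B + β) ^ (1/p) + B ^ (1/p)) * N ^ (1/p) := by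
      calc r ^ (1/p) ≤ s ^ (1/p) + d ^ (1/p) := hrle
        _ ≤ ((α * B + β) ^ (1/p) + B ^ (1/p)) * N ^ (1/p) := by nlinarith
    have := Real.rpow_le_rpow (Real.rpow_nonneg hr0 _) hfin (le_of_lt hp0)
    rw [rpow_one_div_rpow hr0 hp0',
      Real.mul_rpow (by positivity) (Real.rpow_nonneg hN0 _),
      rpow_one_div_rpow hN0 hp0'] at this
    exact this
end

section
/- Let {Tᵢ}_{i∈I} be a p-frame for X with bounds A, B and let {Rᵢ}_{i∈I} be bounded linear functionals on X such that Σᵢ |(Tᵢ − Rᵢ)(x)|^p converges for every x ∈ X. Suppose there is a constant R₀ with 0 < R₀ < A such that Σᵢ |(Tᵢ − Rᵢ)(x)|^p ≤ R₀·‖x‖^p for all x ∈ X. Then {Rᵢ}_{i∈I} is a p-frame for X with bounds (1 − (R₀/A)^{1/p})^p·A and (R₀^{1/p} + B^{1/p})^p. -/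
/-- corollary of stability. If `{Tᵢ}` is a p-frame with bounds
`A, B` and `∑ᵢ|(Tᵢ − Rᵢ)(x)|^p ≤ R₀·ν x^p` with `0 < R₀ < A`, then `{Rᵢ}` is a
p-frame with bounds `(1 − (R₀/A)^(1/p))^p·A` and `(R₀^(1/p) + B^(1/p))^p`. -/
theorem pframe_stability_corollary {X : Type*} [AddCommGroup X] [Module ℂ X]
    (ν : Seminorm ℂ X) {I : Type*} [Countable I]
    (p : ℝ) (hp : 1 < p)
    (T R : I → X →ₗ[ℂ] ℂ)
    (hTb : ∀ i, ∃ M : ℝ, 0 ≤ M ∧ ∀ x : X, ‖T i x‖ ≤ M * ν x)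
    (hRb : ∀ i, ∃ M : ℝ, 0 ≤ M ∧ ∀ x : X, ‖R i x‖ ≤ M * ν x)
    (A B : ℝ) (hA : 0 < A) (hB : 0 < B)
    (hT : ∀ x : X, Summable (fun i => ‖T i x‖ ^ p) ∧
      A * ν x ^ p ≤ ∑' i, ‖T i x‖ ^ p ∧ ∑' i, ‖T i x‖ ^ p ≤ B * ν x ^ p)
    (hdiff : ∀ x : X, Summable fun i => ‖(T i - R i) x‖ ^ p)
    (R₀ : ℝ) (hR₀ : 0 < R₀) (hR₀A : R₀ < A)
    (hpert : ∀ x : X, ∑' i, ‖(T i - R i) x‖ ^ p ≤ R₀ * ν x ^ p) :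
    ∀ x : X, Summable (fun i => ‖R i x‖ ^ p) ∧
      (1 - (R₀ / A) ^ (1 / p)) ^ p * A * ν x ^ p ≤ ∑' i, ‖R i x‖ ^ p ∧
      ∑' i, ‖R i x‖ ^ p ≤ (R₀ ^ (1 / p) + B ^ (1 / p)) ^ p * ν x ^ p := by
  intro x
  have hp0 : (0 : ℝ) < p := lt_trans one_pos hp
  set q : ENNReal := ENNReal.ofReal p with hq_def
  have hq : q.toReal = p := ENNReal.toReal_ofReal hp0.le
  haveI : Fact (1 ≤ q) := ⟨by
    rw [hq_def, ← ENNReal.ofReal_one]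
    exact ENNReal.ofReal_le_ofReal hp.le⟩
  have hq0 : 0 < q.toReal := by rw [hq]; exact hp0
  set a : ℝ := ν x with ha_def
  have ha : 0 ≤ a := apply_nonneg ν x
  -- membership in lp
  have hfT : Memℓp (fun i => T i x) q := memℓp_gen (by rw [hq]; exact (hT x).1)
  have hfG : Memℓp (fun i => (T i - R i) x) q := memℓp_gen (by rw [hq]; exact hdiff x)
  set F : lp (fun _ : I => ℂ) q := ⟨_, hfT⟩ with hF_def
  set G : lp (fun _ : I => ℂ) q := ⟨_, hfG⟩ with hG_def
  have hFGcoe : ∀ i, (F - G : lp (fun _ : I => ℂ) q) i = R i x := by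
    intro i
    have : (F - G : lp (fun _ : I => ℂ) q) i = F i - G i := by
      rw [lp.coeFn_sub]; rfl
    rw [this]
    show T i x - (T i x - R i x) = R i x
    ring
  have hSum : Summable (fun i => ‖R i x‖ ^ p) := by
    have := (F - G : lp (fun _ : I => ℂ) q).2.summable hq0
    rw [hq] at this
    exact this.congr fun i => by rw [hFGcoe i]
  -- identify the tsum with the lp norm
  have htsum : ∑' i, ‖R i x‖ ^ p = ‖(F - G : lp (fun _ : I => ℂ) q)‖ ^ p := by
    rw [show (p : ℝ) = q.toReal from hq.symm, lp.norm_rpow_eq_tsum hq0]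
    exact tsum_congr fun i => by rw [hFGcoe i]
  have hFnorm : ‖F‖ ^ p = ∑' i, ‖T i x‖ ^ p := by
    rw [show (p : ℝ) = q.toReal from hq.symm, lp.norm_rpow_eq_tsum hq0]
  have hGnorm : ‖G‖ ^ p = ∑' i, ‖(T i - R i) x‖ ^ p := by
    rw [show (p : ℝ) = q.toReal from hq.symm, lp.norm_rpow_eq_tsum hq0]
  -- bounds on ‖F‖ and ‖G‖
  have hFub : ‖F‖ ≤ B ^ (1 / p) * a := by
    rw [← Real.rpow_le_rpow_iff (norm_nonneg F) (by positivity) hp0]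
    rw [Real.mul_rpow (by positivity) ha, ← Real.rpow_mul hB.le]
    simp only [one_div, inv_mul_cancel₀ hp0.ne', Real.rpow_one]
    rw [hFnorm]
    exact (hT x).2.2
  have hFlb : A ^ (1 / p) * a ≤ ‖F‖ := by
    rw [← Real.rpow_le_rpow_iff (by positivity) (norm_nonneg F) hp0]
    rw [Real.mul_rpow (by positivity) ha, ← Real.rpow_mul hA.le]
    simp only [one_div, inv_mul_cancel₀ hp0.ne', Real.rpow_one]
    rw [hFnorm]
    exact (hT x).2.1
  have hGub : ‖G‖ ≤ R₀ ^ (1 / p) * a := by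
    rw [← Real.rpow_le_rpow_iff (norm_nonneg G) (by positivity) hp0]
    rw [Real.mul_rpow (by positivity) ha, ← Real.rpow_mul hR₀.le]
    simp only [one_div, inv_mul_cancel₀ hp0.ne', Real.rpow_one]
    rw [hGnorm]
    exact hpert x
  refine ⟨hSum, ?_, ?_⟩
  · -- lower bound
    have key : (A ^ (1 / p) - R₀ ^ (1 / p)) * a ≤ ‖(F - G : lp (fun _ : I => ℂ) q)‖ := by
      have h1 : ‖F‖ - ‖G‖ ≤ ‖(F - G : lp (fun _ : I => ℂ) q)‖ := norm_sub_norm_le F G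
      have : (A ^ (1 / p) - R₀ ^ (1 / p)) * a ≤ ‖F‖ - ‖G‖ := by
        rw [sub_mul]
        linarith [hFlb, hGub]
      linarith
    have hcoef : (1 - (R₀ / A) ^ (1 / p)) * A ^ (1 / p) = A ^ (1 / p) - R₀ ^ (1 / p) := by
      rw [Real.div_rpow hR₀.le hA.le, sub_mul, one_mul,
        div_mul_cancel₀ _ (by positivity : A ^ (1 / p) ≠ 0)]
    have hcoefnn : 0 ≤ A ^ (1 / p) - R₀ ^ (1 / p) := by
      rw [sub_nonneg]
      exact Real.rpow_le_rpow hR₀.le hR₀A.le (by positivity)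
    have hAp : (A ^ (1 / p)) ^ p = A := by
      rw [← Real.rpow_mul hA.le]
      simp [one_div, inv_mul_cancel₀ hp0.ne']
    calc (1 - (R₀ / A) ^ (1 / p)) ^ p * A * a ^ p
        = ((1 - (R₀ / A) ^ (1 / p)) * A ^ (1 / p) * a) ^ p := by
          rw [Real.mul_rpow (by rw [hcoef]; positivity) ha,
            Real.mul_rpow (by
              rw [sub_nonneg]
              exact Real.rpow_le_one (by positivity) ((div_le_one hA).2 hR₀A.le) (by positivity))
              (by positivity), hAp]
      _ = ((A ^ (1 / p) - R₀ ^ (1 / p)) * a) ^ p := by rw [hcoef]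
      _ ≤ ‖(F - G : lp (fun _ : I => ℂ) q)‖ ^ p :=
          Real.rpow_le_rpow (by positivity) key hp0.le
      _ = ∑' i, ‖R i x‖ ^ p := htsum.symm
  · -- upper bound
    have key : ‖(F - G : lp (fun _ : I => ℂ) q)‖ ≤ (R₀ ^ (1 / p) + B ^ (1 / p)) * a := by
      calc ‖(F - G : lp (fun _ : I => ℂ) q)‖ ≤ ‖F‖ + ‖G‖ := norm_sub_le F G
        _ ≤ B ^ (1 / p) * a + R₀ ^ (1 / p) * a := add_le_add hFub hGub
        _ = (R₀ ^ (1 / p) + B ^ (1 / p)) * a := by ring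
    calc ∑' i, ‖R i x‖ ^ p = ‖(F - G : lp (fun _ : I => ℂ) q)‖ ^ p := htsum
      _ ≤ ((R₀ ^ (1 / p) + B ^ (1 / p)) * a) ^ p :=
          Real.rpow_le_rpow (norm_nonneg _) key hp0.le
      _ = (R₀ ^ (1 / p) + B ^ (1 / p)) ^ p * a ^ p :=
          Real.mul_rpow (by positivity) ha
end

section
/- Let {Tᵢ}_{i∈I} be a p-frame for X with bounds A, B and let {Rᵢ}_{i∈I} be bounded linear functionals on X such that Σᵢ |Rᵢ(x)|^p and Σᵢ |(Tᵢ − Rᵢ)(x)|^p converge for every x ∈ X. Then {Rᵢ}_{i∈I} is a p-frame for X if and only if there exists a constant M > 0 such that for all x ∈ X: Σᵢ |Tᵢ(x) − Rᵢ(x)|^p ≤ M·min(Σᵢ |Tᵢ(x)|^p, Σᵢ |Rᵢ(x)|^p). -/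
/-- `{Tᵢ}` is a p-frame for `X` (with respect to the seminorm `ν`) with some
bounds `A, B > 0`. -/
def IsPFrame {X : Type*} [AddCommGroup X] [Module ℂ X] (ν : Seminorm ℂ X)
    {I : Type*} (p : ℝ) (T : I → X →ₗ[ℂ] ℂ) : Prop :=
  ∃ A B : ℝ, 0 < A ∧ 0 < B ∧ ∀ x : X, Summable (fun i => ‖T i x‖ ^ p) ∧
    A * ν x ^ p ≤ ∑' i, ‖T i x‖ ^ p ∧ ∑' i, ‖T i x‖ ^ p ≤ B * ν x ^ p

/-- Minkowski-type inequality for three nonnegative families with pointwise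
triangle inequality. -/
lemma tsum_rpow_tri {I : Type*} {p : ℝ} (hp : 1 ≤ p) (u v w : I → ℝ)
    (hu : ∀ i, 0 ≤ u i) (hv : ∀ i, 0 ≤ v i) (hw : ∀ i, 0 ≤ w i)
    (hle : ∀ i, w i ≤ u i + v i)
    (hus : Summable fun i => u i ^ p) (hvs : Summable fun i => v i ^ p)
    (hws : Summable fun i => w i ^ p) :
    (∑' i, w i ^ p) ^ (1 / p) ≤
      (∑' i, u i ^ p) ^ (1 / p) + (∑' i, v i ^ p) ^ (1 / p) := by
  have hsum := Real.Lp_add_le_tsum_of_nonneg hp hu hv hus hvs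
  have h1 : (∑' i, w i ^ p) ≤ ∑' i, (u i + v i) ^ p := by
    refine Summable.tsum_le_tsum (fun i => ?_) hws hsum.1
    exact Real.rpow_le_rpow (hw i) (hle i) (by linarith)
  calc (∑' i, w i ^ p) ^ (1 / p) ≤ (∑' i, (u i + v i) ^ p) ^ (1 / p) :=
        Real.rpow_le_rpow (tsum_nonneg fun i => Real.rpow_nonneg (hw i) p) h1
          (by positivity)
    _ ≤ _ := hsum.2

/-- From an inequality on `1/p`-th powers, deduce the inequality on the sums. -/
lemma rpow_inv_le_imp {p a b K : ℝ} (hp : 0 < p) (ha : 0 ≤ a) (hb : 0 ≤ b)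
    (hK : 0 ≤ K) (h : a ^ (1 / p) ≤ K * b ^ (1 / p)) : a ≤ K ^ p * b := by
  have h2 : (a ^ (1 / p)) ^ p ≤ (K * b ^ (1 / p)) ^ p :=
    Real.rpow_le_rpow (Real.rpow_nonneg ha _) h hp.le
  rw [one_div, Real.rpow_inv_rpow ha hp.ne',
    Real.mul_rpow hK (Real.rpow_nonneg hb _),
    Real.rpow_inv_rpow hb hp.ne'] at h2
  exact h2

/-- necessary and sufficient condition for stability. Given a
p-frame `{Tᵢ}` with bounds `A, B`, a family `{Rᵢ}` (with the relevant series
convergent) is a p-frame iff there is `M > 0` with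
`∑ᵢ|Tᵢ(x) − Rᵢ(x)|^p ≤ M·min(∑ᵢ|Tᵢ(x)|^p, ∑ᵢ|Rᵢ(x)|^p)` for all `x`. -/
theorem pframe_iff_perturbation_condition {X : Type*} [AddCommGroup X]
    [Module ℂ X] (ν : Seminorm ℂ X) {I : Type*} [Countable I]
    (p : ℝ) (hp : 1 < p)
    (T R : I → X →ₗ[ℂ] ℂ)
    (hTb : ∀ i, ∃ M : ℝ, 0 ≤ M ∧ ∀ x : X, ‖T i x‖ ≤ M * ν x)
    (hRb : ∀ i, ∃ M : ℝ, 0 ≤ M ∧ ∀ x : X, ‖R i x‖ ≤ M * ν x)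
    (A B : ℝ) (hA : 0 < A) (hB : 0 < B)
    (hT : ∀ x : X, Summable (fun i => ‖T i x‖ ^ p) ∧
      A * ν x ^ p ≤ ∑' i, ‖T i x‖ ^ p ∧ ∑' i, ‖T i x‖ ^ p ≤ B * ν x ^ p)
    (hRsum : ∀ x : X, Summable fun i => ‖R i x‖ ^ p)
    (hdiff : ∀ x : X, Summable fun i => ‖(T i - R i) x‖ ^ p) :
    IsPFrame ν p R ↔ ∃ M : ℝ, 0 < M ∧ ∀ x : X,
      ∑' i, ‖T i x - R i x‖ ^ p ≤
        M * min (∑' i, ‖T i x‖ ^ p) (∑' i, ‖R i x‖ ^ p) := by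
  have hp0 : (0:ℝ) < p := by linarith
  have hp1 : (1:ℝ) ≤ p := hp.le
  -- notation
  set a : X → ℝ := fun x => ∑' i, ‖T i x‖ ^ p with ha_def
  set b : X → ℝ := fun x => ∑' i, ‖R i x‖ ^ p with hb_def
  set c : X → ℝ := fun x => ∑' i, ‖T i x - R i x‖ ^ p with hc_def
  have hdiff' : ∀ x : X, Summable fun i => ‖T i x - R i x‖ ^ p := by
    intro x; simpa using hdiff x
  have ha0 : ∀ x, 0 ≤ a x := fun x => tsum_nonneg fun i => by positivity
  have hb0 : ∀ x, 0 ≤ b x := fun x => tsum_nonneg fun i => by positivity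
  have hc0 : ∀ x, 0 ≤ c x := fun x => tsum_nonneg fun i => by positivity
  -- Minkowski inequalities
  have hcab : ∀ x, c x ^ (1/p) ≤ a x ^ (1/p) + b x ^ (1/p) := fun x =>
    tsum_rpow_tri hp1 _ _ _ (fun i => norm_nonneg _) (fun i => norm_nonneg _)
      (fun i => norm_nonneg _) (fun i => norm_sub_le _ _) (hT x).1 (hRsum x)
      (hdiff' x)
  have habc : ∀ x, a x ^ (1/p) ≤ b x ^ (1/p) + c x ^ (1/p) := fun x =>
    tsum_rpow_tri hp1 _ _ _ (fun i => norm_nonneg _) (fun i => norm_nonneg _)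
      (fun i => norm_nonneg _)
      (fun i => by
        calc ‖T i x‖ = ‖R i x + (T i x - R i x)‖ := by ring_nf
          _ ≤ ‖R i x‖ + ‖T i x - R i x‖ := norm_add_le _ _)
      (hRsum x) (hdiff' x) (hT x).1
  have hbac : ∀ x, b x ^ (1/p) ≤ a x ^ (1/p) + c x ^ (1/p) := fun x =>
    tsum_rpow_tri hp1 _ _ _ (fun i => norm_nonneg _) (fun i => norm_nonneg _)
      (fun i => norm_nonneg _)
      (fun i => by
        calc ‖R i x‖ = ‖T i x - (T i x - R i x)‖ := by ring_nf
          _ ≤ ‖T i x‖ + ‖T i x - R i x‖ := norm_sub_le _ _)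
      (hT x).1 (hdiff' x) (hRsum x)
  constructor
  · rintro ⟨A', B', hA', hB', hR⟩
    -- c ≤ K1 * a and c ≤ K2 * b
    set K1 : ℝ := (1 + (B'/A) ^ (1/p)) ^ p with hK1
    set K2 : ℝ := (1 + (B/A') ^ (1/p)) ^ p with hK2
    have hK1pos : 0 < K1 := Real.rpow_pos_of_pos (by positivity) p
    have hK2pos : 0 < K2 := Real.rpow_pos_of_pos (by positivity) p
    refine ⟨max K1 K2, lt_max_of_lt_left hK1pos, fun x => ?_⟩
    -- b x ≤ (B'/A) * a x
    have hba : b x ≤ (B'/A) * a x := by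
      have h1 : b x ≤ B' * ν x ^ p := (hR x).2.2
      have h2 : A * ν x ^ p ≤ a x := (hT x).2.1
      rw [div_mul_eq_mul_div, le_div_iff₀ hA]
      nlinarith
    have hab : a x ≤ (B/A') * b x := by
      have h1 : a x ≤ B * ν x ^ p := (hT x).2.2
      have h2 : A' * ν x ^ p ≤ b x := (hR x).2.1
      rw [div_mul_eq_mul_div, le_div_iff₀ hA']
      nlinarith
    have hca : c x ≤ K1 * a x := by
      apply rpow_inv_le_imp hp0 (hc0 x) (ha0 x) (by positivity)
      calc c x ^ (1/p) ≤ a x ^ (1/p) + b x ^ (1/p) := hcab x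
        _ ≤ a x ^ (1/p) + ((B'/A) * a x) ^ (1/p) :=
            add_le_add_right (Real.rpow_le_rpow (hb0 x) hba (by positivity)) _
        _ = (1 + (B'/A) ^ (1/p)) * a x ^ (1/p) := by
            rw [Real.mul_rpow (by positivity) (ha0 x)]; ring
    have hcb : c x ≤ K2 * b x := by
      apply rpow_inv_le_imp hp0 (hc0 x) (hb0 x) (by positivity)
      calc c x ^ (1/p) ≤ a x ^ (1/p) + b x ^ (1/p) := hcab x
        _ ≤ ((B/A') * b x) ^ (1/p) + b x ^ (1/p) :=
            add_le_add_left (Real.rpow_le_rpow (ha0 x) hab (by positivity)) _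
        _ = (1 + (B/A') ^ (1/p)) * b x ^ (1/p) := by
            rw [Real.mul_rpow (by positivity) (hb0 x)]; ring
    rw [mul_min_of_nonneg _ _ (le_max_of_le_left hK1pos.le)]
    exact le_min
      (hca.trans (mul_le_mul_of_nonneg_right (le_max_left _ _) (ha0 x)))
      (hcb.trans (mul_le_mul_of_nonneg_right (le_max_right _ _) (hb0 x)))
  · rintro ⟨M, hM, hMle⟩
    set C : ℝ := (1 + M ^ (1/p)) ^ p with hC
    have hCpos : 0 < C := Real.rpow_pos_of_pos (by positivity) p
    refine ⟨A / C, C * B, div_pos hA hCpos, by positivity, fun x => ?_⟩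
    have hca : c x ≤ M * a x := (hMle x).trans
      (mul_le_mul_of_nonneg_left (min_le_left _ _) hM.le)
    have hcb : c x ≤ M * b x := (hMle x).trans
      (mul_le_mul_of_nonneg_left (min_le_right _ _) hM.le)
    -- a x ≤ C * b x
    have haCb : a x ≤ C * b x := by
      apply rpow_inv_le_imp hp0 (ha0 x) (hb0 x) (by positivity)
      calc a x ^ (1/p) ≤ b x ^ (1/p) + c x ^ (1/p) := habc x
        _ ≤ b x ^ (1/p) + (M * b x) ^ (1/p) :=
            add_le_add_right (Real.rpow_le_rpow (hc0 x) hcb (by positivity)) _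
        _ = (1 + M ^ (1/p)) * b x ^ (1/p) := by
            rw [Real.mul_rpow hM.le (hb0 x)]; ring
    have hbCa : b x ≤ C * a x := by
      apply rpow_inv_le_imp hp0 (hb0 x) (ha0 x) (by positivity)
      calc b x ^ (1/p) ≤ a x ^ (1/p) + c x ^ (1/p) := hbac x
        _ ≤ a x ^ (1/p) + (M * a x) ^ (1/p) :=
            add_le_add_right (Real.rpow_le_rpow (hc0 x) hca (by positivity)) _
        _ = (1 + M ^ (1/p)) * a x ^ (1/p) := by
            rw [Real.mul_rpow hM.le (ha0 x)]; ring
    refine ⟨hRsum x, ?_, ?_⟩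
    · -- A/C * ν x ^ p ≤ b x
      have h2 : A * ν x ^ p ≤ a x := (hT x).2.1
      rw [div_mul_eq_mul_div, div_le_iff₀ hCpos]
      calc A * ν x ^ p ≤ a x := h2
        _ ≤ C * b x := haCb
        _ = b x * C := mul_comm _ _
    · calc b x ≤ C * a x := hbCa
        _ ≤ C * (B * ν x ^ p) := mul_le_mul_of_nonneg_left (hT x).2.2 hCpos.le
        _ = C * B * ν x ^ p := by ring
end
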